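/- arXiv:2311.10948 — 9 statements merged into one kernel-verified Lean document; each statement's English description precedes it below -/
import Mathlib

section
/- If f(x) = Σ_{i=0}^∞ e^{-λ_i} x^i is an entire function with positive coefficients satisfying ∫_0^∞ f(sx)/f(x) dx = 1/(1-s) - β for all s ∈ [0,1), then setting u(x) = x f'(x)/f(x), we have |∫_0^∞ e^{-t u(x)} dx - 1/t| ≤ 1 + β for all t > 0. -/
/-!
Writing `f (e^y) = ∑ aᵢ e^{iy}`, the function `y ↦ log f (e^y)` is convex with derivative `u`
(Jensen for the weights `aᵢ xⁱ`, whose mean index is `u x`), so `f (e^c x) ≥ f x · e^{c u(x)}`.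
With `s = e^{-t}` this gives `e^{-t u(x)} ≤ f(sx)/f(x) ≤ e^{-t u(sx)}`, and integrating over
`x > 0` against the balance equation traps `∫ e^{-tu}` between `s (1/(1-s) - β)` and
`1/(1-s) - β`, both within `1 + β` of `1/t`. The balance equation also forces the series to
converge everywhere: otherwise `f` would vanish (as a divergent `tsum`) beyond some point and
the integrals would stay bounded as `s → 1`.
-/

open MeasureTheory Real Set

noncomputable def tsumPow (a : ℕ → ℝ) (x : ℝ) : ℝ := ∑' i, a i * x ^ i

noncomputable def elasticity (f : ℝ → ℝ) (x : ℝ) : ℝ := x * deriv f x / f x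

lemma exp_mean_mul_tsum_le {w : ℕ → ℝ} (hw : ∀ i, 0 ≤ w i) (hW : Summable w)
    (hG : Summable fun i : ℕ => (i : ℝ) * w i) (hW0 : ∑' i, w i ≠ 0) (c : ℝ)
    (hE : Summable fun i : ℕ => w i * exp (c * i)) :
    (∑' i, w i) * exp (c * ((∑' i : ℕ, (i : ℝ) * w i) / ∑' i, w i))
      ≤ ∑' i : ℕ, w i * exp (c * i) := by
  set W := ∑' i, w i
  set m := (∑' i : ℕ, (i : ℝ) * w i) / W
  -- the tangent line of `exp` at `c * m`
  have tangent (i : ℕ) : exp (c * m) * (w i + c * ((i : ℝ) * w i) - c * m * w i)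
      ≤ w i * exp (c * i) := by
    have h := mul_le_mul_of_nonneg_left (add_one_le_exp (c * i - c * m)) (exp_pos (c * m)).le
    rw [← exp_add, add_sub_cancel] at h
    nlinarith [hw i]
  have hsum : ∑' i : ℕ, exp (c * m) * (w i + c * ((i : ℝ) * w i) - c * m * w i)
      = W * exp (c * m) := by
    rw [tsum_mul_left, (hW.add (hG.mul_left c)).tsum_sub (hW.mul_left _),
      hW.tsum_add (hG.mul_left c), tsum_mul_left, tsum_mul_left]
    have hm : m * W = ∑' i : ℕ, (i : ℝ) * w i := div_mul_cancel₀ _ hW0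
    linear_combination (-(exp (c * m) * c)) * hm
  rw [← hsum]
  exact (((hW.add (hG.mul_left c)).sub (hW.mul_left _)).mul_left _).tsum_le_tsum tangent hE

lemma setIntegral_mono_on_of_nonneg {f g : ℝ → ℝ} {s : Set ℝ} (hs : MeasurableSet s)
    (hf : ∀ x ∈ s, 0 ≤ f x) (hg : IntegrableOn g s) (hfg : ∀ x ∈ s, f x ≤ g x) :
    ∫ x in s, f x ≤ ∫ x in s, g x :=
  integral_mono_of_nonneg (ae_restrict_of_forall_mem hs hf) hg (ae_restrict_of_forall_mem hs hfg)

namespace tsumPow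

variable {a : ℕ → ℝ}

lemma summable_of_le (ha : ∀ i, 0 ≤ a i) {x y : ℝ} (hx : 0 ≤ x) (hxy : x ≤ y)
    (hy : Summable fun i => a i * y ^ i) : Summable fun i => a i * x ^ i :=
  hy.of_nonneg_of_le (fun i => mul_nonneg (ha i) (pow_nonneg hx i))
    (fun i => mul_le_mul_of_nonneg_left (pow_le_pow_left₀ hx hxy i) (ha i))

lemma mono (ha : ∀ i, 0 ≤ a i) {x y : ℝ} (hx : 0 ≤ x) (hxy : x ≤ y)
    (hy : Summable fun i => a i * y ^ i) : tsumPow a x ≤ tsumPow a y :=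
  (summable_of_le ha hx hxy hy).tsum_le_tsum
    (fun i => mul_le_mul_of_nonneg_left (pow_le_pow_left₀ hx hxy i) (ha i)) hy

lemma pos (ha : ∀ i, 0 < a i) {x : ℝ} (hx : 0 ≤ x) (hs : Summable fun i => a i * x ^ i) :
    0 < tsumPow a x :=
  hs.tsum_pos (fun i => mul_nonneg (ha i).le (pow_nonneg hx i)) 0 (by simpa using ha 0)

lemma nonneg (ha : ∀ i, 0 ≤ a i) {x : ℝ} (hx : 0 ≤ x) : 0 ≤ tsumPow a x :=
  tsum_nonneg fun i => mul_nonneg (ha i) (pow_nonneg hx i)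

lemma eq_zero_of_not_summable {x : ℝ} (h : ¬Summable fun i => a i * x ^ i) : tsumPow a x = 0 :=
  tsum_eq_zero_of_not_summable h

lemma div_le_one (ha : ∀ i, 0 < a i) {s x : ℝ} (hs : s ∈ Icc (0 : ℝ) 1) (hx : 0 ≤ x) :
    tsumPow a (s * x) / tsumPow a x ≤ 1 := by
  by_cases hsum : Summable fun i => a i * x ^ i
  · rw [_root_.div_le_one (pos ha hx hsum)]
    exact mono (fun i => (ha i).le) (mul_nonneg hs.1 hx) (mul_le_of_le_one_left hx hs.2) hsum
  · rw [eq_zero_of_not_summable hsum, div_zero]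
    exact zero_le_one

/-- Beyond `x₀` the divergent `tsum` is `0`, hence so is the quotient. -/
lemma integral_div_le_of_not_summable (ha : ∀ i, 0 < a i) {x₀ : ℝ} (hx₀ : 0 ≤ x₀)
    (hdiv : ¬Summable fun i => a i * x₀ ^ i) {s : ℝ} (hs : s ∈ Icc (0 : ℝ) 1) :
    ∫ x in Ioi 0, tsumPow a (s * x) / tsumPow a x ≤ x₀ := by
  have hle : ∀ x ∈ Ioi (0 : ℝ), tsumPow a (s * x) / tsumPow a x ≤ (Ioo 0 x₀).indicator 1 x := by
    intro x hx
    by_cases hxx₀ : x < x₀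
    · rw [indicator_of_mem (show x ∈ Ioo 0 x₀ from ⟨hx, hxx₀⟩), Pi.one_apply]
      exact div_le_one ha hs (le_of_lt hx)
    · have hdiv' : ¬Summable fun i => a i * x ^ i :=
        fun h => hdiv (summable_of_le (fun i => (ha i).le) hx₀ (not_lt.1 hxx₀) h)
      rw [eq_zero_of_not_summable hdiv', div_zero]
      exact indicator_nonneg (fun _ _ => zero_le_one) x
  calc ∫ x in Ioi 0, tsumPow a (s * x) / tsumPow a x
      ≤ ∫ x in Ioi 0, (Ioo 0 x₀).indicator 1 x := by
        refine setIntegral_mono_on_of_nonneg measurableSet_Ioi (fun x hx => ?_) ?_ hle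
        · exact div_nonneg (nonneg (fun i => (ha i).le) (mul_nonneg hs.1 (le_of_lt hx)))
            (nonneg (fun i => (ha i).le) (le_of_lt hx))
        · exact (integrable_indicator_iff measurableSet_Ioo).2
            (integrableOn_const measure_Ioo_lt_top.ne)
    _ = x₀ := by
        rw [integral_indicator_one measurableSet_Ioo, measureReal_restrict_apply measurableSet_Ioo,
          inter_eq_left.2 Ioo_subset_Ioi_self, Real.volume_real_Ioo_of_le hx₀, sub_zero]

lemma summable_of_integral_div_eq {β : ℝ} (ha : ∀ i, 0 < a i) (hβ : β < 1)
    (hbal : ∀ s ∈ Ico (0 : ℝ) 1, ∫ x in Ioi 0, tsumPow a (s * x) / tsumPow a x = 1 / (1 - s) - β)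
    (x : ℝ) : Summable fun i => a i * x ^ i := by
  suffices h : Summable fun i => a i * |x| ^ i by
    refine .of_abs (h.congr fun i => ?_)
    rw [abs_mul, abs_pow, abs_of_pos (ha i)]
  by_contra hdiv
  have hs : 1 - 1 / (|x| + 2) ∈ Ico (0 : ℝ) 1 := by
    have h0 : 0 < 1 / (|x| + 2) := by positivity
    have h1 : 1 / (|x| + 2) ≤ 1 := by
      rw [_root_.div_le_one (by positivity)]; linarith [abs_nonneg x]
    exact ⟨by linarith, by linarith⟩
  have hle := integral_div_le_of_not_summable ha (abs_nonneg x) hdiv (Ico_subset_Icc_self hs)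
  rw [hbal _ hs, sub_sub_cancel, one_div_one_div] at hle
  linarith

section Entire

variable (ha : ∀ i, 0 < a i) (hsum : ∀ x, Summable fun i => a i * x ^ i)
include ha hsum

lemma summable_natCast_mul {x : ℝ} (hx : 0 ≤ x) :
    Summable fun i : ℕ => (i : ℝ) * (a i * x ^ i) := by
  refine (hsum (2 * x)).of_nonneg_of_le (fun i => by have := ha i; positivity) (fun i => ?_)
  calc (i : ℝ) * (a i * x ^ i) ≤ 2 ^ i * (a i * x ^ i) := by
        gcongr
        · have := ha i; positivity
        · exact_mod_cast Nat.lt_two_pow_self.le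
    _ = a i * (2 * x) ^ i := by ring

lemma hasDerivAt (x : ℝ) : HasDerivAt (tsumPow a) (∑' i, a i * (i * x ^ (i - 1))) x := by
  set R := |x| + 1
  have hR : 1 ≤ R := by linarith [abs_nonneg x]
  have hbound : Summable fun i : ℕ => a i * (i * R ^ (i - 1)) := by
    refine (summable_natCast_mul ha hsum (x := R) (by linarith)).of_nonneg_of_le
      (fun i => by have := ha i; positivity) (fun i => ?_)
    rw [mul_left_comm]
    gcongr
    · exact (ha i).le
    · exact Nat.sub_le i 1
  refine hasDerivAt_tsum_of_isPreconnected hbound Metric.isOpen_ball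
    (convex_ball (0 : ℝ) R).isPreconnected (fun i y _ => (hasDerivAt_pow i y).const_mul (a i))
    (fun i y hy => ?_) (Metric.mem_ball_self (by linarith)) (hsum 0) ?_
  · have hyR : |y| ≤ R := by simpa [Real.dist_eq] using (Metric.mem_ball.1 hy).le
    rw [Real.norm_eq_abs, abs_mul, abs_mul, abs_of_pos (ha i), Nat.abs_cast, abs_pow]
    have := ha i
    gcongr
  · simp [R]

lemma mul_deriv (x : ℝ) : x * deriv (tsumPow a) x = ∑' i : ℕ, (i : ℝ) * (a i * x ^ i) := by
  rw [(hasDerivAt ha hsum x).deriv, ← tsum_mul_left]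
  refine tsum_congr fun i => ?_
  cases i with
  | zero => simp
  | succ n => simp only [Nat.add_sub_cancel, pow_succ]; push_cast; ring

lemma continuous : Continuous (tsumPow a) :=
  continuous_iff_continuousAt.2 fun x => (hasDerivAt ha hsum x).continuousAt

lemma mul_exp_elasticity_le {x : ℝ} (hx : 0 < x) (c : ℝ) :
    tsumPow a x * exp (c * elasticity (tsumPow a) x) ≤ tsumPow a (exp c * x) := by
  have hpow (i : ℕ) : a i * (exp c * x) ^ i = a i * x ^ i * exp (c * i) := by
    rw [mul_pow, ← exp_nat_mul]; ring_nf
  rw [elasticity, mul_deriv ha hsum, tsumPow, tsumPow, tsum_congr hpow]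
  exact exp_mean_mul_tsum_le (fun i => (mul_pos (ha i) (pow_pos hx i)).le) (hsum x)
    (summable_natCast_mul ha hsum hx.le) (pos ha hx.le (hsum x)).ne' c
    ((hsum _).congr hpow)

lemma exp_neg_mul_elasticity_le_div {x : ℝ} (hx : 0 < x) (t : ℝ) :
    exp (-t * elasticity (tsumPow a) x) ≤ tsumPow a (exp (-t) * x) / tsumPow a x := by
  rw [le_div_iff₀ (pos ha hx.le (hsum x)), mul_comm]
  exact mul_exp_elasticity_le ha hsum hx (-t)

lemma div_le_exp_neg_mul_elasticity {x : ℝ} (hx : 0 < x) (t : ℝ) :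
    tsumPow a (exp (-t) * x) / tsumPow a x
      ≤ exp (-t * elasticity (tsumPow a) (exp (-t) * x)) := by
  have hx' : 0 < exp (-t) * x := by positivity
  have h := mul_exp_elasticity_le ha hsum hx' t
  rw [← mul_assoc, ← exp_add, add_neg_cancel, exp_zero, one_mul] at h
  set E := elasticity (tsumPow a) (exp (-t) * x)
  rw [div_le_iff₀ (pos ha hx.le (hsum x))]
  calc tsumPow a (exp (-t) * x) = tsumPow a (exp (-t) * x) * exp (t * E) * exp (-t * E) := by
        rw [mul_assoc, ← exp_add, neg_mul, add_neg_cancel, exp_zero, mul_one]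
    _ ≤ exp (-t * E) * tsumPow a x := by rw [mul_comm _ (tsumPow a x)]; gcongr

end Entire

end tsumPow

lemma integral_Ioi_le_of_sandwich {g q : ℝ → ℝ} {s : ℝ} (hs : 0 < s)
    (hg : AEStronglyMeasurable g (volume.restrict (Ioi 0))) (hq : IntegrableOn q (Ioi 0))
    (hg0 : ∀ x, 0 ≤ g x) (hgq : ∀ x > 0, g x ≤ q x) (hqg : ∀ x > 0, q x ≤ g (s * x)) :
    s * ∫ x in Ioi 0, q x ≤ ∫ x in Ioi 0, g x ∧ ∫ x in Ioi 0, g x ≤ ∫ x in Ioi 0, q x := by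
  have hgi : IntegrableOn g (Ioi 0) := hq.mono' hg <| ae_restrict_of_forall_mem measurableSet_Ioi
    fun x hx => (Real.norm_of_nonneg (hg0 x)).trans_le (hgq x hx)
  have hgs : IntegrableOn (fun x => g (s * x)) (Ioi 0) :=
    (integrableOn_Ioi_comp_mul_left_iff g 0 hs).2 (by rwa [mul_zero])
  refine ⟨?_, setIntegral_mono_on_of_nonneg measurableSet_Ioi (fun x _ => hg0 x) hq hgq⟩
  have h := setIntegral_mono_on_of_nonneg measurableSet_Ioi
    (fun x hx => (hg0 x).trans (hgq x hx)) hgs hqg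
  rw [integral_comp_mul_left_Ioi g 0 hs, mul_zero, smul_eq_mul] at h
  calc s * ∫ x in Ioi 0, q x ≤ s * (s⁻¹ * ∫ x in Ioi 0, g x) := by gcongr
    _ = ∫ x in Ioi 0, g x := by field_simp

/-- Both bounds come from `1 - exp (-t) ≤ t ≤ exp t - 1`,
i.e. `1 / t - 1 ≤ 1 / (exp t - 1) ≤ 1 / t`. -/
lemma abs_sub_one_div_le_of_bounds {t β I : ℝ} (ht : 0 < t) (hβ : 0 ≤ β)
    (hlo : exp (-t) * (1 / (1 - exp (-t)) - β) ≤ I) (hhi : I ≤ 1 / (1 - exp (-t)) - β) :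
    |I - 1 / t| ≤ 1 + β := by
  set s := exp (-t)
  have hs0 : 0 < s := exp_pos _
  have hs1 : s < 1 := exp_lt_one_iff.2 (by linarith)
  have h1 : 1 - s ≤ t := by linarith [add_one_le_exp (-t)]
  have h2 : s * (1 + t) ≤ 1 := by
    calc s * (1 + t) ≤ s * exp t := by gcongr; linarith [add_one_le_exp t]
      _ = 1 := by rw [← exp_add, neg_add_cancel, exp_zero]
  have hup : 1 / (1 - s) ≤ 1 / t + 1 := by
    rw [div_le_iff₀ (by linarith), div_add_one ht.ne', div_mul_eq_mul_div, le_div_iff₀ ht]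
    nlinarith
  have hdown : 1 / t - 1 ≤ s * (1 / (1 - s)) := by
    rw [div_sub_one ht.ne', div_le_iff₀ ht, mul_one_div, div_mul_eq_mul_div,
      le_div_iff₀ (by linarith)]
    nlinarith
  rw [abs_le]
  constructor <;> nlinarith

theorem stmt0 (β : ℝ) (hβ : β ∈ Set.Ico (0:ℝ) 1)
    (lam : ℕ → ℝ) (f : ℝ → ℝ)
    (hf : ∀ x : ℝ, f x = ∑' i : ℕ, Real.exp (-lam i) * x ^ i)
    (hbal : ∀ s ∈ Set.Ico (0:ℝ) 1,
      (∫ x in Set.Ioi (0:ℝ), f (s * x) / f x) = 1 / (1 - s) - β)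
    (u : ℝ → ℝ) (hu : ∀ x, u x = x * deriv f x / f x) :
    ∀ t > (0:ℝ),
      |(∫ x in Set.Ioi (0:ℝ), Real.exp (-t * u x)) - 1 / t| ≤ 1 + β := by
  obtain rfl : f = tsumPow (fun i => exp (-lam i)) := funext hf
  obtain rfl : u = elasticity (tsumPow fun i => exp (-lam i)) := funext hu
  set a : ℕ → ℝ := fun i => exp (-lam i)
  have ha (i : ℕ) : 0 < a i := exp_pos _
  have hsum := tsumPow.summable_of_integral_div_eq ha hβ.2 hbal
  intro t ht
  have hs : exp (-t) ∈ Ico (0 : ℝ) 1 := ⟨(exp_pos _).le, exp_lt_one_iff.2 (by linarith)⟩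
  have hq : IntegrableOn (fun x => tsumPow a (exp (-t) * x) / tsumPow a x) (Ioi 0) := by
    by_contra hq
    have h := hbal _ hs
    rw [integral_undef hq] at h
    have : 1 ≤ 1 / (1 - exp (-t)) := by rw [le_div_iff₀ (by linarith [hs.2])]; linarith [hs.1]
    linarith [hβ.2]
  have hmeas : Measurable (elasticity (tsumPow a)) :=
    (measurable_id.mul (measurable_deriv _)).div (tsumPow.continuous ha hsum).measurable
  obtain ⟨hlo, hhi⟩ := integral_Ioi_le_of_sandwich (exp_pos (-t))
    (measurable_exp.comp (hmeas.const_mul (-t))).aestronglyMeasurable hq (fun x => (exp_pos _).le)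
    (fun x hx => tsumPow.exp_neg_mul_elasticity_le_div ha hsum hx t)
    (fun x hx => tsumPow.div_le_exp_neg_mul_elasticity ha hsum hx t)
  rw [hbal _ hs] at hlo hhi
  exact abs_sub_one_div_le_of_bounds ht hβ.1 hlo hhi
end

section
/- Let g: [0,∞) → ℝ be C^1 with g(0) = 0, g'(0) = 0, piecewise C^2, and M_1 ≤ g'' ≤ M_2 for constants 0 < M_1 < M_2 < ∞. Define a(g) = ∫_0^∞ e^{-g(t)} dt, b(g) = ∫_0^∞ t^2 e^{-g(t)} dt, and d(g) = b(g)/(4 a(g)^3). Then 1/12 < d(g) < 1/2. -/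
/-!
Both bounds compare `f = exp (-g)` on `(0, ∞)` with an extremal profile `h` of the same mass
`A = ∫ f`: if `f - h` has the sign of `t₀ - t`, then `0 < ∫ (f - h) (t₀² - t²)`, which says that
`h` has the larger second moment. Since `0 < f ≤ 1`, the indicator of `(0, A]` crosses `f` from
above at `A`, so `A³ / 3 < ∫ t² f`. Since `g` is convex with `g 0 = 0`, the slope `g t / t` is
monotone, so `g` crosses the line `t / A` once, and `f` crosses `exp (-t / A)` from above there,
so `∫ t² f < 2 A³`.
-/

open MeasureTheory Real Set

open scoped Nat

section HalfLine

variable {g : ℝ → ℝ}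

lemma DifferentiableOn.hasDerivWithinAt_Ici_derivWithin (hg : DifferentiableOn ℝ g (Ici 0))
    {x : ℝ} (hx : 0 ≤ x) : HasDerivWithinAt g (derivWithin g (Ici 0) x) (Ici x) x :=
  (hg x hx).hasDerivWithinAt.mono (Ici_subset_Ici.2 hx)

lemma hasDerivAt_mul_sq_div_two (M x : ℝ) : HasDerivAt (fun t => M * t ^ 2 / 2) (M * x) x :=
  (((hasDerivAt_pow 2 x).const_mul M).div_const 2).congr_deriv (by ring)

lemma le_mul_sq_div_two_of_derivWithin_le (hg : DifferentiableOn ℝ g (Ici 0)) (hg0 : g 0 = 0)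
    {M : ℝ} (hM : ∀ x ≥ 0, derivWithin g (Ici 0) x ≤ M * x) {x : ℝ} (hx : 0 ≤ x) :
    g x ≤ M * x ^ 2 / 2 :=
  image_le_of_deriv_right_le_deriv_boundary (hg.continuousOn.mono Icc_subset_Ici_self)
    (fun y hy => hg.hasDerivWithinAt_Ici_derivWithin hy.1) (by simp [hg0])
    (by fun_prop : Continuous fun t : ℝ => M * t ^ 2 / 2).continuousOn
    (fun y _ => (hasDerivAt_mul_sq_div_two M y).hasDerivWithinAt) (fun y hy => hM y hy.1)
    ⟨hx, le_rfl⟩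

lemma mul_sq_div_two_le_of_le_derivWithin (hg : DifferentiableOn ℝ g (Ici 0)) (hg0 : g 0 = 0)
    {M : ℝ} (hM : ∀ x ≥ 0, M * x ≤ derivWithin g (Ici 0) x) {x : ℝ} (hx : 0 ≤ x) :
    M * x ^ 2 / 2 ≤ g x :=
  image_le_of_deriv_right_le_deriv_boundary
    (by fun_prop : Continuous fun t : ℝ => M * t ^ 2 / 2).continuousOn
    (fun y _ => (hasDerivAt_mul_sq_div_two M y).hasDerivWithinAt) (by simp [hg0])
    (hg.continuousOn.mono Icc_subset_Ici_self)
    (fun y hy => hg.hasDerivWithinAt_Ici_derivWithin hy.1) (fun y hy => hM y hy.1)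
    ⟨hx, le_rfl⟩

lemma monotoneOn_div_self_of_monotoneOn_derivWithin (hg : DifferentiableOn ℝ g (Ici 0))
    (hg0 : g 0 = 0) (hmono : MonotoneOn (derivWithin g (Ici 0)) (Ici 0)) :
    MonotoneOn (fun t => g t / t) (Ioi 0) := by
  have hconv : ConvexOn ℝ (Ici 0) g := by
    refine MonotoneOn.convexOn_of_deriv (convex_Ici 0) hg.continuousOn ?_ ?_ <;>
      rw [interior_Ici]
    · exact hg.mono Ioi_subset_Ici_self
    · exact (hmono.mono Ioi_subset_Ici_self).congr
        fun x hx => derivWithin_of_mem_nhds (Ici_mem_nhds hx)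
  intro s hs t ht hst
  simpa [hg0] using hconv.secant_mono self_mem_Ici (Ioi_subset_Ici_self hs)
    (Ioi_subset_Ici_self ht) hs.ne' ht.ne' hst

lemma exists_div_self_lt_of_le_mul_sq {M : ℝ} (hM : 0 < M)
    (hg : ∀ t ≥ 0, g t ≤ M * t ^ 2 / 2) {L : ℝ} (hL : 0 < L) : ∃ t > 0, g t / t < L := by
  have ht : 0 < L / M := div_pos hL hM
  refine ⟨L / M, ht, ?_⟩
  rw [div_lt_iff₀ ht]
  have hMt : M * (L / M) = L := mul_div_cancel₀ L hM.ne'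
  nlinarith [hg (L / M) ht.le]

lemma exists_lt_div_self_of_mul_sq_le {M : ℝ} (hM : 0 < M)
    (hg : ∀ t ≥ 0, M * t ^ 2 / 2 ≤ g t) (L : ℝ) : ∃ t > 0, L < g t / t := by
  have ht : 0 < 2 * (|L| + 1) / M := by positivity
  refine ⟨2 * (|L| + 1) / M, ht, ?_⟩
  rw [lt_div_iff₀ ht]
  have hMt : M * (2 * (|L| + 1) / M) = 2 * (|L| + 1) := mul_div_cancel₀ _ hM.ne'
  nlinarith [hg _ ht.le, le_abs_self L]

end HalfLine

lemma MonotoneOn.exists_threshold {q : ℝ → ℝ} (hq : MonotoneOn q (Ioi 0)) {L : ℝ}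
    (hL : ∃ t > 0, L < q t) : ∃ t₀ ≥ 0, (∀ t ∈ Ioo 0 t₀, q t ≤ L) ∧ ∀ t > t₀, L < q t := by
  set S := {t ∈ Ioi 0 | L < q t}
  have hS : S.Nonempty := hL
  have hbdd : BddBelow S := ⟨0, fun t ht => le_of_lt ht.1⟩
  refine ⟨sInf S, le_csInf hS fun t ht => le_of_lt ht.1, fun t ht => ?_, fun t ht => ?_⟩
  · exact not_lt.1 fun h => (csInf_le hbdd ⟨ht.1, h⟩).not_gt ht.2
  · obtain ⟨s, hs, hst⟩ := exists_lt_of_csInf_lt hS ht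
    exact hs.2.trans_le (hq hs.1 (mem_Ioi.2 (hs.1.out.trans hst)) hst.le)

lemma integrableOn_pow_mul_exp_neg_mul_Ioi (n : ℕ) {r : ℝ} (hr : 0 < r) :
    IntegrableOn (fun t => t ^ n * exp (-(r * t))) (Ioi 0) := by
  simpa [rpow_natCast] using
    integrableOn_rpow_mul_exp_neg_mul_rpow (s := n) (p := 1)
      (by linarith [n.cast_nonneg (α := ℝ)]) one_pos hr

lemma integral_pow_mul_exp_neg_mul_Ioi (n : ℕ) {r : ℝ} (hr : 0 < r) :
    ∫ t in Ioi 0, t ^ n * exp (-(r * t)) = n ! / r ^ (n + 1) := by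
  have h := integral_rpow_mul_exp_neg_mul_Ioi (a := n + 1) (by positivity) hr
  rw [add_sub_cancel_right, Gamma_nat_eq_factorial, ← Nat.cast_succ, rpow_natCast] at h
  simp_rw [rpow_natCast] at h
  rw [h, one_div, inv_pow, Nat.succ_eq_add_one, div_eq_mul_inv, mul_comm]

lemma integrableOn_pow_mul_exp_neg_of_mul_sq_le {g : ℝ → ℝ} {b : ℝ} (hb : 0 < b)
    (hg : ContinuousOn g (Ioi 0)) (hgb : ∀ t ∈ Ioi 0, b * t ^ 2 ≤ g t) (n : ℕ) :
    IntegrableOn (fun t => t ^ n * exp (-g t)) (Ioi 0) := by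
  refine (integrableOn_rpow_mul_exp_neg_mul_sq hb (s := n)
    (by linarith [n.cast_nonneg (α := ℝ)])).mono' ?_ ?_
  · exact ((continuous_pow n).continuousOn.mul
      (continuous_exp.comp_continuousOn hg.neg)).aestronglyMeasurable measurableSet_Ioi
  · filter_upwards [ae_restrict_mem measurableSet_Ioi] with t ht
    have ht' : (0 : ℝ) ≤ t := le_of_lt ht
    rw [norm_of_nonneg (by positivity), rpow_natCast]
    gcongr
    linarith [hgb t ht]

theorem integral_sq_mul_lt_of_sign_change {f h : ℝ → ℝ} {t₀ a b : ℝ}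
    (hf : IntegrableOn f (Ioi 0)) (hh : IntegrableOn h (Ioi 0))
    (hf₂ : IntegrableOn (fun t => t ^ 2 * f t) (Ioi 0))
    (hh₂ : IntegrableOn (fun t => t ^ 2 * h t) (Ioi 0))
    (hmass : ∫ t in Ioi 0, f t = ∫ t in Ioi 0, h t)
    (hsign : ∀ t ∈ Ioi 0, 0 ≤ (f t - h t) * (t₀ ^ 2 - t ^ 2))
    (ha : 0 ≤ a) (hab : a < b) (hstrict : ∀ t ∈ Ioo a b, 0 < (f t - h t) * (t₀ ^ 2 - t ^ 2)) :
    ∫ t in Ioi 0, t ^ 2 * f t < ∫ t in Ioi 0, t ^ 2 * h t := by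
  have hf₀ : IntegrableOn (fun t => t₀ ^ 2 * f t - t₀ ^ 2 * h t) (Ioi 0) :=
    (hf.const_mul _).sub (hh.const_mul _)
  have hh₀ : IntegrableOn (fun t => t ^ 2 * f t - t ^ 2 * h t) (Ioi 0) := hf₂.sub hh₂
  have hexpand : (fun t => (f t - h t) * (t₀ ^ 2 - t ^ 2)) =
      fun t => (t₀ ^ 2 * f t - t₀ ^ 2 * h t) - (t ^ 2 * f t - t ^ 2 * h t) := by
    ext t; ring
  have hpos : 0 < ∫ t in Ioi 0, (f t - h t) * (t₀ ^ 2 - t ^ 2) := by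
    rw [setIntegral_pos_iff_support_of_nonneg_ae
      ((ae_restrict_iff' measurableSet_Ioi).2 (ae_of_all _ hsign)) (hexpand ▸ hf₀.sub hh₀)]
    calc (0 : ENNReal) < volume (Ioo a b) := by simpa using hab
      _ ≤ _ := measure_mono fun t ht =>
        show t ∈ Function.support _ ∩ Ioi 0 from ⟨(hstrict t ht).ne', ha.trans_lt ht.1⟩
  rw [hexpand, integral_sub hf₀ hh₀, integral_sub (hf.const_mul _) (hh.const_mul _),
    integral_sub hf₂ hh₂, integral_const_mul, integral_const_mul, hmass] at hpos
  linarith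

theorem cube_div_three_lt_integral_sq_mul {f : ℝ → ℝ} (hf₀ : ∀ t ∈ Ioi 0, 0 < f t)
    (hf₁ : ∀ t ∈ Ioi 0, f t ≤ 1) (hf : IntegrableOn f (Ioi 0))
    (hf₂ : IntegrableOn (fun t => t ^ 2 * f t) (Ioi 0)) :
    (∫ t in Ioi 0, f t) ^ 3 / 3 < ∫ t in Ioi 0, t ^ 2 * f t := by
  set A := ∫ t in Ioi 0, f t
  have hA : 0 ≤ A := setIntegral_nonneg measurableSet_Ioi fun t ht => (hf₀ t ht).le
  set χ : ℝ → ℝ := (Ioc 0 A).indicator 1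
  have hχ₂_eq : (fun t => t ^ 2 * χ t) = (Ioc 0 A).indicator fun t => t ^ 2 := by
    ext t; by_cases ht : t ∈ Ioc 0 A <;> simp [χ, ht]
  have hIoc : Ioi 0 ∩ Ioc 0 A = Ioc 0 A := inter_eq_right.2 Ioc_subset_Ioi_self
  have hχ : IntegrableOn χ (Ioi 0) :=
    ((integrableOn_const (by simp)).integrable_indicator measurableSet_Ioc).integrableOn
  have hχ₂ : IntegrableOn (fun t => t ^ 2 * χ t) (Ioi 0) := by
    rw [hχ₂_eq]
    exact ((continuous_pow 2).integrableOn_Ioc.integrable_indicator measurableSet_Ioc).integrableOn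
  have hmass : ∫ t in Ioi 0, χ t = A := by
    simp [χ, setIntegral_indicator measurableSet_Ioc, hIoc, hA]
  have hmoment : ∫ t in Ioi 0, t ^ 2 * χ t = A ^ 3 / 3 := by
    rw [hχ₂_eq, setIntegral_indicator measurableSet_Ioc, hIoc,
      ← intervalIntegral.integral_of_le hA, integral_pow]
    ring
  rw [← hmoment]
  refine integral_sq_mul_lt_of_sign_change hχ hf hχ₂ hf₂ hmass (t₀ := A) ?_ hA (lt_add_one A) ?_
  · intro t ht
    by_cases htA : t ≤ A
    · have : χ t = 1 := by simp [χ, indicator_of_mem (show t ∈ Ioc 0 A from ⟨ht, htA⟩)]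
      rw [this]
      exact mul_nonneg (by linarith [hf₁ t ht]) (by nlinarith [mem_Ioi.1 ht])
    · have : χ t = 0 := indicator_of_notMem (fun h => htA h.2) _
      rw [this]
      exact mul_nonneg_of_nonpos_of_nonpos (by linarith [hf₀ t ht]) (by nlinarith [mem_Ioi.1 ht])
  · intro t ht
    have ht₀ : t ∈ Ioi 0 := hA.trans_lt ht.1
    have : χ t = 0 := indicator_of_notMem (fun h => ht.1.not_ge h.2) _
    rw [this]
    exact mul_pos_of_neg_of_neg (by linarith [hf₀ t ht₀]) (by nlinarith [ht.1])

theorem integral_sq_mul_exp_neg_lt_two_mul_cube {g : ℝ → ℝ}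
    (hq : MonotoneOn (fun t => g t / t) (Ioi 0))
    (hsmall : ∀ L > 0, ∃ t > 0, g t / t < L) (hlarge : ∀ L, ∃ t > 0, L < g t / t)
    (hint : IntegrableOn (fun t => exp (-g t)) (Ioi 0))
    (hint₂ : IntegrableOn (fun t => t ^ 2 * exp (-g t)) (Ioi 0)) :
    ∫ t in Ioi 0, t ^ 2 * exp (-g t) < 2 * (∫ t in Ioi 0, exp (-g t)) ^ 3 := by
  set A := ∫ t in Ioi 0, exp (-g t)
  have : NeZero (volume.restrict (Ioi (0 : ℝ))) := ⟨by simp [Measure.restrict_eq_zero]⟩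
  have hL : 0 < A⁻¹ := inv_pos.2 (integral_exp_pos hint)
  obtain ⟨t₀, ht₀, hbelow, habove⟩ := hq.exists_threshold (hlarge A⁻¹)
  obtain ⟨c, hc, hgc⟩ := hsmall A⁻¹ hL
  have hct₀ : c ≤ t₀ := not_lt.1 fun h => (habove c h).not_gt hgc
  have hmass : ∫ t in Ioi 0, exp (-(A⁻¹ * t)) = A := by
    simpa using integral_pow_mul_exp_neg_mul_Ioi 0 hL
  have hmoment : ∫ t in Ioi 0, t ^ 2 * exp (-(A⁻¹ * t)) = 2 * A ^ 3 := by
    rw [integral_pow_mul_exp_neg_mul_Ioi 2 hL]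
    simp [div_eq_mul_inv]
  rw [← hmoment]
  refine integral_sq_mul_lt_of_sign_change (t₀ := t₀) hint
    (by simpa using integrableOn_pow_mul_exp_neg_mul_Ioi 0 hL) hint₂
    (integrableOn_pow_mul_exp_neg_mul_Ioi 2 hL) hmass.symm ?_ le_rfl hc ?_
  · intro t ht
    rcases lt_trichotomy t t₀ with h | rfl | h
    · have hle : g t ≤ A⁻¹ * t := (div_le_iff₀ ht).1 (hbelow t ⟨ht, h⟩)
      exact mul_nonneg (sub_nonneg.2 (exp_le_exp.2 (by linarith)))
        (by nlinarith [mem_Ioi.1 ht])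
    · simp
    · have hlt : A⁻¹ * t < g t := (lt_div_iff₀ (mem_Ioi.1 ht)).1 (habove t h)
      exact mul_nonneg_of_nonpos_of_nonpos (sub_nonpos.2 (exp_le_exp.2 (by linarith)))
        (by nlinarith)
  · intro t ht
    have hlt : g t < A⁻¹ * t := (div_lt_iff₀ ht.1).1 ((hq ht.1 hc ht.2.le).trans_lt hgc)
    exact mul_pos (sub_pos.2 (exp_lt_exp.2 (by linarith))) (by nlinarith [ht.1, ht.2])

theorem stmt4 (g : ℝ → ℝ) (M₁ M₂ : ℝ) (h1 : 0 < M₁) (h12 : M₁ < M₂)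
    (hC1 : ContDiffOn ℝ 1 g (Set.Ici 0))
    (hg0 : g 0 = 0) (hg'0 : derivWithin g (Set.Ici 0) 0 = 0)
    (hsd : ∀ s t : ℝ, 0 ≤ s → s ≤ t →
      M₁ * (t - s) ≤ derivWithin g (Set.Ici 0) t - derivWithin g (Set.Ici 0) s ∧
      derivWithin g (Set.Ici 0) t - derivWithin g (Set.Ici 0) s ≤ M₂ * (t - s)) :
    1/12 < (∫ t in Set.Ioi (0:ℝ), t^2 * Real.exp (-g t)) /
      (4 * (∫ t in Set.Ioi (0:ℝ), Real.exp (-g t))^3) ∧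
    (∫ t in Set.Ioi (0:ℝ), t^2 * Real.exp (-g t)) /
      (4 * (∫ t in Set.Ioi (0:ℝ), Real.exp (-g t))^3) < 1/2 := by
  have hg : DifferentiableOn ℝ g (Ici 0) := hC1.differentiableOn one_ne_zero
  have hlower : ∀ x ≥ 0, M₁ * x ^ 2 / 2 ≤ g x := fun x hx =>
    mul_sq_div_two_le_of_le_derivWithin hg hg0
      (fun y hy => by simpa [hg'0] using (hsd 0 y le_rfl hy).1) hx
  have hupper : ∀ x ≥ 0, g x ≤ M₂ * x ^ 2 / 2 := fun x hx =>
    le_mul_sq_div_two_of_derivWithin_le hg hg0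
      (fun y hy => by simpa [hg'0] using (hsd 0 y le_rfl hy).2) hx
  have hslope := monotoneOn_div_self_of_monotoneOn_derivWithin hg hg0 fun s hs t _ hst =>
    sub_nonneg.1 ((mul_nonneg h1.le (sub_nonneg.2 hst)).trans (hsd s t hs hst).1)
  have hint (n : ℕ) : IntegrableOn (fun t => t ^ n * exp (-g t)) (Ioi 0) :=
    integrableOn_pow_mul_exp_neg_of_mul_sq_le (half_pos h1)
      (hg.continuousOn.mono Ioi_subset_Ici_self) (fun t ht => by linarith [hlower t ht.le]) n
  have hint₀ : IntegrableOn (fun t => exp (-g t)) (Ioi 0) := by simpa using hint 0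
  have hlow := cube_div_three_lt_integral_sq_mul (fun t _ => exp_pos (-g t))
    (fun t ht => exp_le_one_iff.2 (by nlinarith [hlower t ht.le, sq_nonneg t])) hint₀ (hint 2)
  have hup := integral_sq_mul_exp_neg_lt_two_mul_cube hslope
    (fun L hL => exists_div_self_lt_of_le_mul_sq (h1.trans h12) hupper hL)
    (exists_lt_div_self_of_mul_sq_le h1 hlower) hint₀ (hint 2)
  have hA : 0 < 4 * (∫ t in Ioi 0, exp (-g t)) ^ 3 := by linarith
  constructor
  · rw [lt_div_iff₀ hA]; linarith
  · rw [div_lt_iff₀ hA]; linarith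
end

section
/- For all x ≥ 0, the complementary error function satisfies √π e^{x²} erfc(x) > 2/(x + √(x² + 2)), where erfc(x) = (2/√π) ∫_x^∞ e^{-t²} dt. -/
/-! With `s = √(t² + 2)` one has `2 / (t + s) = s - t`, so the claim reads
`(s - x) e^{-x²} < 2 ∫_x^∞ e^{-t²} dt`. The left side `g(x)` tends to `0` at infinity, and
`-g'(t) = e^{-t²} (s - t)(1 + 2ts) / s` falls short of `2 e^{-t²}` by `e^{-t²} (s - t)³ / (2s) > 0`;
integrating `-g' < 2 e^{-t²}` over `(x, ∞)` gives the bound. -/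

open MeasureTheory Real Set Filter Topology

theorem lt_integral_Ioi_of_neg_deriv_lt {f g g' : ℝ → ℝ} {a : ℝ}
    (hderiv : ∀ t ∈ Ici a, HasDerivAt g (g' t) t) (hg'_nonpos : ∀ t ∈ Ioi a, g' t ≤ 0)
    (hlt : ∀ t ∈ Ioi a, -g' t < f t) (hf : IntegrableOn f (Ioi a))
    (hg : Tendsto g atTop (𝓝 0)) : g a < ∫ t in Ioi a, f t := by
  have hg'_int : IntegrableOn g' (Ioi a) := integrableOn_Ioi_deriv_of_nonpos' hderiv hg'_nonpos hg
  have hFTC : ∫ t in Ioi a, g' t = 0 - g a :=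
    integral_Ioi_of_hasDerivAt_of_tendsto' hderiv hg'_int hg
  have hpos : 0 < ∫ t in Ioi a, (f t + g' t) := by
    have hsum_pos : ∀ t ∈ Ioi a, 0 < f t + g' t := fun t ht => by linarith [hlt t ht]
    have hsupp : (Function.support fun t => f t + g' t) ∩ Ioi a = Ioi a :=
      inter_eq_right.mpr fun t ht => (hsum_pos t ht).ne'
    rw [setIntegral_pos_iff_support_of_nonneg_ae
      (ae_restrict_of_forall_mem measurableSet_Ioi fun t ht => (hsum_pos t ht).le) (hf.add hg'_int),
      hsupp, volume_Ioi]
    exact ENNReal.zero_lt_top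
  rw [integral_add hf hg'_int, hFTC] at hpos
  linarith

theorem sqrt_sq_add_two_pos (t : ℝ) : 0 < √(t ^ 2 + 2) := sqrt_pos.mpr (by positivity)

theorem sq_sqrt_sq_add_two (t : ℝ) : √(t ^ 2 + 2) ^ 2 = t ^ 2 + 2 := sq_sqrt (by positivity)

theorem lt_sqrt_sq_add_two (t : ℝ) : t < √(t ^ 2 + 2) :=
  lt_sqrt_of_sq_lt (by linarith)

theorem sqrt_sq_add_two_sub_eq (t : ℝ) : √(t ^ 2 + 2) - t = 2 / (t + √(t ^ 2 + 2)) := by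
  have hsum_pos : 0 < t + √(t ^ 2 + 2) := by
    nlinarith [sqrt_sq_add_two_pos t, sq_sqrt_sq_add_two t, lt_sqrt_sq_add_two t]
  rw [eq_div_iff hsum_pos.ne']
  linear_combination sq_sqrt_sq_add_two t

noncomputable def erfcMinorant (t : ℝ) : ℝ := (√(t ^ 2 + 2) - t) * exp (-t ^ 2)

noncomputable def erfcMinorantNegDeriv (t : ℝ) : ℝ :=
  exp (-t ^ 2) * (√(t ^ 2 + 2) - t) * (1 + 2 * t * √(t ^ 2 + 2)) / √(t ^ 2 + 2)

theorem hasDerivAt_erfcMinorant (t : ℝ) :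
    HasDerivAt erfcMinorant (-erfcMinorantNegDeriv t) t := by
  have hsqrt : HasDerivAt (fun t : ℝ => √(t ^ 2 + 2)) (2 * t / (2 * √(t ^ 2 + 2))) t := by
    simpa using ((hasDerivAt_pow 2 t).add_const 2).sqrt (by positivity)
  have hexp : HasDerivAt (fun t : ℝ => exp (-t ^ 2)) (exp (-t ^ 2) * -(2 * t)) t := by
    simpa using ((hasDerivAt_pow 2 t).neg).exp
  refine ((hsqrt.sub (hasDerivAt_id' t)).mul hexp).congr_deriv ?_
  simp only [Pi.sub_apply, erfcMinorantNegDeriv]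
  field_simp
  ring

theorem erfcMinorantNegDeriv_nonneg {t : ℝ} (ht : 0 ≤ t) : 0 ≤ erfcMinorantNegDeriv t := by
  have hdiff : 0 ≤ √(t ^ 2 + 2) - t := sub_nonneg.mpr (lt_sqrt_sq_add_two t).le
  unfold erfcMinorantNegDeriv
  positivity

theorem erfcMinorantNegDeriv_lt (t : ℝ) : erfcMinorantNegDeriv t < 2 * exp (-t ^ 2) := by
  have hs := sqrt_sq_add_two_pos t
  have hst := lt_sqrt_sq_add_two t
  have hgap : 2 * √(t ^ 2 + 2) - (√(t ^ 2 + 2) - t) * (1 + 2 * t * √(t ^ 2 + 2))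
      = (√(t ^ 2 + 2) - t) ^ 3 / 2 := by
    linear_combination -(t + √(t ^ 2 + 2)) / 2 * sq_sqrt_sq_add_two t
  have hcube : 0 < (√(t ^ 2 + 2) - t) ^ 3 := pow_pos (by linarith) 3
  calc erfcMinorantNegDeriv t
        = exp (-t ^ 2) * ((√(t ^ 2 + 2) - t) * (1 + 2 * t * √(t ^ 2 + 2))) / √(t ^ 2 + 2) := by
          rw [erfcMinorantNegDeriv, mul_assoc]
    _ < exp (-t ^ 2) * (2 * √(t ^ 2 + 2)) / √(t ^ 2 + 2) :=
          div_lt_div_of_pos_right (mul_lt_mul_of_pos_left (by linarith) (exp_pos _)) hs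
    _ = 2 * exp (-t ^ 2) := by field_simp

theorem tendsto_erfcMinorant : Tendsto erfcMinorant atTop (𝓝 0) := by
  have hsum : Tendsto (fun t : ℝ => t + √(t ^ 2 + 2)) atTop atTop :=
    tendsto_atTop_mono (fun t => le_add_of_nonneg_right (sqrt_nonneg _)) tendsto_id
  have hdiff : Tendsto (fun t : ℝ => √(t ^ 2 + 2) - t) atTop (𝓝 0) := by
    simpa only [sqrt_sq_add_two_sub_eq] using tendsto_const_nhds.div_atTop hsum
  have hexp : Tendsto (fun t : ℝ => exp (-t ^ 2)) atTop (𝓝 0) :=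
    tendsto_exp_atBot.comp (tendsto_neg_atTop_atBot.comp (tendsto_pow_atTop two_ne_zero))
  have hprod := hdiff.mul hexp
  rwa [zero_mul] at hprod

theorem erfcMinorant_lt {x : ℝ} (hx : 0 ≤ x) :
    erfcMinorant x < ∫ t in Ioi x, 2 * exp (-t ^ 2) := by
  have hint : Integrable fun t : ℝ => exp (-t ^ 2) := by
    simpa using integrable_exp_neg_mul_sq one_pos
  refine lt_integral_Ioi_of_neg_deriv_lt (fun t _ => hasDerivAt_erfcMinorant t)
    (fun t ht => neg_nonpos.mpr (erfcMinorantNegDeriv_nonneg (hx.trans ht.out.le)))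
    (fun t _ => by simpa using erfcMinorantNegDeriv_lt t) (hint.const_mul 2).integrableOn
    tendsto_erfcMinorant

theorem stmt7 (erfc : ℝ → ℝ)
    (herfc : ∀ x : ℝ, erfc x = 2 / Real.sqrt π * ∫ t in Set.Ioi x, Real.exp (-t^2)) :
    ∀ x : ℝ, 0 ≤ x →
      2 / (x + Real.sqrt (x^2 + 2)) < Real.sqrt π * Real.exp (x^2) * erfc x := by
  intro x hx
  have hbound := erfcMinorant_lt hx
  rw [integral_const_mul] at hbound
  rw [herfc x, ← sqrt_sq_add_two_sub_eq]
  calc √(x ^ 2 + 2) - x = erfcMinorant x * exp (x ^ 2) := by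
        rw [erfcMinorant, mul_assoc, ← exp_add, neg_add_cancel, exp_zero, mul_one]
    _ < (2 * ∫ t in Ioi x, exp (-t ^ 2)) * exp (x ^ 2) := by gcongr
    _ = √π * exp (x ^ 2) * (2 / √π * ∫ t in Ioi x, exp (-t ^ 2)) := by field_simp
end

section
/- Define f₁(c) = ∫_0^∞ x(x+c)² e^{-x²/2 − cx} dx / ∫_0^∞ x e^{-x²/2 − cx} dx for c ≥ 0. Then f₁'(c) > 0 for all c ≥ 0. -/
/-!
Substituting `u = x + c` turns both integrals into the Gaussian tail moments
`M k c = ∫_c^∞ u^k e^{-u²/2} du`, so that `f₁ = (M 3 - c M 2) / (M 1 - c M 0)`.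
Since `(M k)' c = -c^k e^{-c²/2}`, one gets `(M (k+1) - c M k)' = -M k`, hence
`f₁' = (M 0 M 3 - M 1 M 2) / (M 1 - c M 0)²`. Integration by parts gives `M 1 = e^{-c²/2}`,
`M 2 = c e^{-c²/2} + M 0` and `M 3 = (c² + 2) e^{-c²/2}`, so the numerator equals
`e^{-c²/2} ((c² + 1) M 0 - c M 1) = e^{-c²/2} ∫_c^∞ (u - c)² e^{-u²/2} du > 0`.
-/

open MeasureTheory Real Set Filter Asymptotics Topology

theorem isLittleO_pow_mul_exp_neg_sq_div_two (n : ℕ) :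
    (fun x : ℝ => x ^ n * exp (-x ^ 2 / 2)) =o[atTop] fun x => exp (-(1 / 2) * x) := by
  refine (rpow_mul_exp_neg_mul_sq_isLittleO_exp_neg one_half_pos n).congr_left fun x => ?_
  rw [rpow_natCast]
  ring_nf

theorem integrableOn_Ioi_pow_mul_exp_neg_sq_div_two (n : ℕ) (c : ℝ) :
    IntegrableOn (fun x : ℝ => x ^ n * exp (-x ^ 2 / 2)) (Ioi c) :=
  integrable_of_isBigO_exp_neg one_half_pos (by fun_prop)
    (isLittleO_pow_mul_exp_neg_sq_div_two n).isBigO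

theorem tendsto_pow_mul_exp_neg_sq_div_two (n : ℕ) :
    Tendsto (fun x : ℝ => x ^ n * exp (-x ^ 2 / 2)) atTop (𝓝 0) :=
  (isLittleO_pow_mul_exp_neg_sq_div_two n).trans_tendsto <|
    tendsto_exp_atBot.comp <| tendsto_id.const_mul_atTop_of_neg (by norm_num)

theorem hasDerivAt_exp_neg_sq_div_two (x : ℝ) :
    HasDerivAt (fun u : ℝ => exp (-u ^ 2 / 2)) (-x * exp (-x ^ 2 / 2)) x := by
  have h : HasDerivAt (fun u : ℝ => -u ^ 2 / 2) (-x) x := by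
    refine ((hasDerivAt_pow 2 x).neg.div_const 2).congr_deriv ?_
    push_cast; ring
  simpa [mul_comm] using h.exp

theorem integral_Ioi_comp_add_right {E : Type*} [NormedAddCommGroup E] [NormedSpace ℝ E]
    (f : ℝ → E) (a c : ℝ) :
    ∫ x in Ioi a, f (x + c) = ∫ x in Ioi (a + c), f x := by
  rw [← integral_indicator measurableSet_Ioi, ← integral_indicator measurableSet_Ioi,
    ← integral_add_right_eq_self (indicator (Ioi (a + c)) f) c]
  congr 1
  funext x
  simp [indicator_apply]

theorem integral_Ioi_pos {f : ℝ → ℝ} {c : ℝ} (hf : IntegrableOn f (Ioi c))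
    (hpos : ∀ u ∈ Ioi c, 0 < f u) : 0 < ∫ u in Ioi c, f u := by
  rw [setIntegral_pos_iff_support_of_nonneg_ae ?_ hf]
  · refine lt_of_lt_of_le ?_ (measure_mono fun u hu => ⟨(hpos u hu).ne', hu⟩)
    simp [volume_Ioi]
  · filter_upwards [ae_restrict_mem measurableSet_Ioi] with u hu
    exact (hpos u hu).le

noncomputable def gaussianTailMoment (k : ℕ) (c : ℝ) : ℝ :=
  ∫ u in Ioi c, u ^ k * exp (-u ^ 2 / 2)

/-- For `n = 0` the truncated `n - 1` is harmless, being multiplied by `0`. -/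
theorem gaussianTailMoment_succ (n : ℕ) (c : ℝ) :
    gaussianTailMoment (n + 1) c
      = c ^ n * exp (-c ^ 2 / 2) + n * gaussianTailMoment (n - 1) c := by
  have hderiv : ∀ x ∈ Ici c, HasDerivAt (fun u : ℝ => -(u ^ n * exp (-u ^ 2 / 2)))
      (x ^ (n + 1) * exp (-x ^ 2 / 2) - n * (x ^ (n - 1) * exp (-x ^ 2 / 2))) x := by
    intro x _
    refine ((hasDerivAt_pow n x).mul (hasDerivAt_exp_neg_sq_div_two x)).neg.congr_deriv ?_
    ring
  have hint := integrableOn_Ioi_pow_mul_exp_neg_sq_div_two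
  have key := integral_Ioi_of_hasDerivAt_of_tendsto' hderiv
    ((hint (n + 1) c).sub ((hint (n - 1) c).const_mul _))
    (by simpa using (tendsto_pow_mul_exp_neg_sq_div_two n).neg)
  rw [integral_sub (hint (n + 1) c) ((hint (n - 1) c).const_mul _), integral_const_mul] at key
  rw [gaussianTailMoment, gaussianTailMoment]
  linarith

theorem gaussianTailMoment_one (c : ℝ) : gaussianTailMoment 1 c = exp (-c ^ 2 / 2) := by
  simpa using gaussianTailMoment_succ 0 c

theorem gaussianTailMoment_two (c : ℝ) :
    gaussianTailMoment 2 c = c * exp (-c ^ 2 / 2) + gaussianTailMoment 0 c := by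
  simpa using gaussianTailMoment_succ 1 c

theorem gaussianTailMoment_three (c : ℝ) :
    gaussianTailMoment 3 c = (c ^ 2 + 2) * exp (-c ^ 2 / 2) := by
  rw [gaussianTailMoment_succ 2, gaussianTailMoment_one]
  push_cast
  ring

theorem hasDerivAt_gaussianTailMoment (k : ℕ) (c : ℝ) :
    HasDerivAt (gaussianTailMoment k) (-(c ^ k * exp (-c ^ 2 / 2))) c := by
  have hcont : Continuous fun u : ℝ => u ^ k * exp (-u ^ 2 / 2) := by fun_prop
  have hsplit : ∀ d, gaussianTailMoment k d
      = gaussianTailMoment k 0 - ∫ u in (0 : ℝ)..d, u ^ k * exp (-u ^ 2 / 2) := fun d => by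
    rw [gaussianTailMoment, gaussianTailMoment, ← intervalIntegral.integral_Ioi_sub_Ioi'
      (integrableOn_Ioi_pow_mul_exp_neg_sq_div_two k 0)
      (integrableOn_Ioi_pow_mul_exp_neg_sq_div_two k d)]
    ring
  have hFTC := intervalIntegral.integral_hasDerivAt_right (hcont.intervalIntegrable 0 c)
    (hcont.stronglyMeasurableAtFilter _ _) hcont.continuousAt
  exact (hFTC.const_sub _).congr_of_eventuallyEq (Eventually.of_forall hsplit)

theorem integrableOn_Ioi_sub_mul_pow_mul_exp_neg_sq_div_two (a c : ℝ) (k : ℕ) :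
    IntegrableOn (fun u : ℝ => (u - a) * u ^ k * exp (-u ^ 2 / 2)) (Ioi c) := by
  refine ((integrableOn_Ioi_pow_mul_exp_neg_sq_div_two (k + 1) c).sub
    ((integrableOn_Ioi_pow_mul_exp_neg_sq_div_two k c).const_mul a)).congr_fun ?_
    measurableSet_Ioi
  intro u _
  simp only [Pi.sub_apply]
  ring

theorem integral_Ioi_sub_mul_pow_mul_exp_neg_sq_div_two (a c : ℝ) (k : ℕ) :
    ∫ u in Ioi c, (u - a) * u ^ k * exp (-u ^ 2 / 2)
      = gaussianTailMoment (k + 1) c - a * gaussianTailMoment k c := by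
  have hint := integrableOn_Ioi_pow_mul_exp_neg_sq_div_two
  rw [gaussianTailMoment, gaussianTailMoment, ← integral_const_mul,
    ← integral_sub (hint (k + 1) c) ((hint k c).const_mul a)]
  congr 1 with u
  ring

theorem hasDerivAt_gaussianTailMoment_succ_sub_mul (k : ℕ) (c : ℝ) :
    HasDerivAt (fun d => gaussianTailMoment (k + 1) d - d * gaussianTailMoment k d)
      (-gaussianTailMoment k c) c := by
  refine ((hasDerivAt_gaussianTailMoment (k + 1) c).sub
    ((hasDerivAt_id c).mul (hasDerivAt_gaussianTailMoment k c))).congr_deriv ?_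
  simp only [id]
  ring

theorem gaussianTailMoment_one_sub_mul_pos (c : ℝ) :
    0 < gaussianTailMoment 1 c - c * gaussianTailMoment 0 c := by
  rw [← integral_Ioi_sub_mul_pow_mul_exp_neg_sq_div_two]
  refine integral_Ioi_pos (integrableOn_Ioi_sub_mul_pow_mul_exp_neg_sq_div_two c c 0) ?_
  intro u hu
  have : 0 < u - c := sub_pos.mpr hu
  positivity

theorem integral_Ioi_sub_sq_mul_exp_neg_sq_div_two (c : ℝ) :
    ∫ u in Ioi c, (u - c) ^ 2 * exp (-u ^ 2 / 2)
      = (c ^ 2 + 1) * gaussianTailMoment 0 c - c * gaussianTailMoment 1 c := by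
  have hint := integrableOn_Ioi_sub_mul_pow_mul_exp_neg_sq_div_two c c
  calc ∫ u in Ioi c, (u - c) ^ 2 * exp (-u ^ 2 / 2)
      = ∫ u in Ioi c, ((u - c) * u ^ 1 * exp (-u ^ 2 / 2)
          - c * ((u - c) * u ^ 0 * exp (-u ^ 2 / 2))) := by
        congr 1 with u
        ring
    _ = (c ^ 2 + 1) * gaussianTailMoment 0 c - c * gaussianTailMoment 1 c := by
        rw [integral_sub (hint 1) ((hint 0).const_mul c), integral_const_mul,
          integral_Ioi_sub_mul_pow_mul_exp_neg_sq_div_two,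
          integral_Ioi_sub_mul_pow_mul_exp_neg_sq_div_two, gaussianTailMoment_two,
          gaussianTailMoment_one]
        ring

theorem gaussianTailMoment_mul_sub_mul_pos (c : ℝ) :
    0 < gaussianTailMoment 0 c * gaussianTailMoment 3 c
      - gaussianTailMoment 1 c * gaussianTailMoment 2 c := by
  have hH : 0 < (c ^ 2 + 1) * gaussianTailMoment 0 c - c * gaussianTailMoment 1 c := by
    rw [← integral_Ioi_sub_sq_mul_exp_neg_sq_div_two]
    refine integral_Ioi_pos ?_ fun u hu => ?_
    · refine ((integrableOn_Ioi_sub_mul_pow_mul_exp_neg_sq_div_two c c 1).sub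
        ((integrableOn_Ioi_sub_mul_pow_mul_exp_neg_sq_div_two c c 0).const_mul c)).congr_fun
        (fun u _ => ?_) measurableSet_Ioi
      simp only [Pi.sub_apply]
      ring
    · have : 0 < u - c := sub_pos.mpr hu
      positivity
  have hE := exp_pos (-c ^ 2 / 2)
  rw [gaussianTailMoment_one] at hH
  rw [gaussianTailMoment_three, gaussianTailMoment_two, gaussianTailMoment_one]
  nlinarith

theorem integral_Ioi_zero_mul_exp_neg_sq_div_two_sub_mul (ψ : ℝ → ℝ) (c : ℝ) :
    ∫ x in Ioi 0, ψ x * exp (-x ^ 2 / 2 - c * x)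
      = exp (c ^ 2 / 2) * ∫ u in Ioi c, ψ (u - c) * exp (-u ^ 2 / 2) := by
  rw [← integral_const_mul, ← zero_add c, ← integral_Ioi_comp_add_right, zero_add]
  congr 1 with x
  rw [add_sub_cancel_right, mul_left_comm, ← exp_add]
  ring_nf

theorem integral_Ioi_zero_mul_exp_eq_gaussianTailMoment (c : ℝ) :
    ∫ x in Ioi 0, x * exp (-x ^ 2 / 2 - c * x)
      = exp (c ^ 2 / 2) * (gaussianTailMoment 1 c - c * gaussianTailMoment 0 c) := by
  rw [integral_Ioi_zero_mul_exp_neg_sq_div_two_sub_mul (fun x => x),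
    ← integral_Ioi_sub_mul_pow_mul_exp_neg_sq_div_two]
  simp

theorem integral_Ioi_zero_mul_add_sq_mul_exp_eq_gaussianTailMoment (c : ℝ) :
    ∫ x in Ioi 0, x * (x + c) ^ 2 * exp (-x ^ 2 / 2 - c * x)
      = exp (c ^ 2 / 2) * (gaussianTailMoment 3 c - c * gaussianTailMoment 2 c) := by
  rw [integral_Ioi_zero_mul_exp_neg_sq_div_two_sub_mul (fun x => x * (x + c) ^ 2),
    ← integral_Ioi_sub_mul_pow_mul_exp_neg_sq_div_two]
  simp

theorem stmt8 (f₁ : ℝ → ℝ)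
    (hf₁ : ∀ c : ℝ, f₁ c =
      (∫ x in Set.Ioi (0:ℝ), x * (x + c)^2 * Real.exp (-x^2/2 - c*x)) /
      (∫ x in Set.Ioi (0:ℝ), x * Real.exp (-x^2/2 - c*x))) :
    ∀ c : ℝ, 0 ≤ c → 0 < deriv f₁ c := by
  have hf : f₁ = fun c => (gaussianTailMoment 3 c - c * gaussianTailMoment 2 c)
      / (gaussianTailMoment 1 c - c * gaussianTailMoment 0 c) := by
    funext c
    rw [hf₁, integral_Ioi_zero_mul_add_sq_mul_exp_eq_gaussianTailMoment,
      integral_Ioi_zero_mul_exp_eq_gaussianTailMoment, mul_div_mul_left _ _ (exp_ne_zero _)]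
  intro c _
  have hD := gaussianTailMoment_one_sub_mul_pos c
  rw [hf, ((hasDerivAt_gaussianTailMoment_succ_sub_mul 2 c).fun_div
    (hasDerivAt_gaussianTailMoment_succ_sub_mul 0 c) hD.ne').deriv]
  refine div_pos ?_ (pow_pos hD 2)
  linarith [gaussianTailMoment_mul_sub_mul_pos c]
end

section
/- Define f₂(c) = ∫_0^∞ x(x+c) e^{-x²/2 − cx} dx / ∫_0^∞ x e^{-x²/2 − cx} dx for c ≥ 0. Then f₂'(c) > 0 for all c ≥ 0. -/
/-!
Write `M k c = ∫₀^∞ xᵏ e^{-x²/2 - cx} dx` (`tiltedMoment k c`). Integrating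
`(x^{k+1} e^{-x²/2 - cx})'` over `(0, ∞)` gives `M (k+2) + c M (k+1) = (k+1) M k`, so the
numerator of `f₂` is `M 0` and `f₂ = M 0 / M 1`. Differentiating under the integral sign,
`∂_c M k = -M (k+1)`, hence `f₂' = (M 0 · M 2 - (M 1)²) / (M 1)²`, and the numerator is positive
by the strict Cauchy–Schwarz inequality for the weight `e^{-x²/2 - cx}` on `(0, ∞)`.
-/

open MeasureTheory Real Set Filter

lemma integral_pos_of_ae_pos {α : Type*} [MeasurableSpace α] {μ : Measure α}
    (hμ : μ ≠ 0) {f : α → ℝ} (hf : Integrable f μ) (hpos : ∀ᵐ x ∂μ, 0 < f x) : 0 < ∫ x, f x ∂μ := by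
  rw [integral_pos_iff_support_of_nonneg_ae (hpos.mono fun _ hx => hx.le) hf]
  have hsupp : Function.support f =ᵐ[μ] univ :=
    ae_eq_univ.2 (ae_iff.1 (hpos.mono fun _ hx => hx.ne'))
  rw [measure_congr hsupp]
  exact Measure.measure_univ_pos.2 hμ

noncomputable def tiltedMoment (k : ℕ) (c : ℝ) : ℝ :=
  ∫ x in Ioi (0:ℝ), x ^ k * exp (-x ^ 2 / 2 - c * x)

lemma integrableOn_pow_mul_exp_quadratic (k : ℕ) (c : ℝ) :
    IntegrableOn (fun x => x ^ k * exp (-x ^ 2 / 2 - c * x)) (Ioi 0) := by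
  have hgauss : IntegrableOn (fun x : ℝ => exp (c ^ 2) * (x ^ (k : ℝ) * exp (-(1 / 4) * x ^ 2)))
      (Ioi 0) :=
    (integrableOn_rpow_mul_exp_neg_mul_sq (by norm_num)
      (neg_one_lt_zero.trans_le k.cast_nonneg)).const_mul _
  -- `-x²/4 - cx ≤ c²`, so the integrand is at most `e^{c²} xᵏ e^{-x²/4}`.
  refine hgauss.mono' (by fun_prop) ?_
  filter_upwards [ae_restrict_mem measurableSet_Ioi] with x (hx : 0 < x)
  rw [rpow_natCast, Real.norm_of_nonneg (by positivity), mul_left_comm, ← exp_add]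
  gcongr
  nlinarith [sq_nonneg (x / 2 + c)]

lemma tiltedMoment_pos (k : ℕ) (c : ℝ) : 0 < tiltedMoment k c := by
  refine integral_pos_of_ae_pos (by simp) (integrableOn_pow_mul_exp_quadratic k c) ?_
  filter_upwards [ae_restrict_mem measurableSet_Ioi] with x (hx : 0 < x)
  positivity

lemma hasDerivAt_tiltedMoment (k : ℕ) (c : ℝ) :
    HasDerivAt (tiltedMoment k) (-tiltedMoment (k + 1) c) c := by
  have hdiff := hasDerivAt_integral_of_dominated_loc_of_deriv_le (μ := volume.restrict (Ioi 0))
    (F := fun b x => x ^ k * exp (-x ^ 2 / 2 - b * x))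
    (F' := fun b x => -(x ^ (k + 1) * exp (-x ^ 2 / 2 - b * x)))
    (bound := fun x => x ^ (k + 1) * exp (-x ^ 2 / 2 - (c - 1) * x))
    (Metric.ball_mem_nhds c one_pos) (.of_forall fun b => by fun_prop)
    (integrableOn_pow_mul_exp_quadratic k c) (by fun_prop) ?_
    (integrableOn_pow_mul_exp_quadratic (k + 1) (c - 1)) ?_
  · rw [tiltedMoment, ← integral_neg]
    exact hdiff.2
  · filter_upwards [ae_restrict_mem measurableSet_Ioi] with x (hx : 0 < x) b hb
    rw [norm_neg, Real.norm_of_nonneg (by positivity)]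
    have : c - 1 < b := by linarith [(abs_lt.1 (mem_ball_iff_norm.1 hb)).1]
    gcongr
  · refine .of_forall fun x b _ => ?_
    refine ((hasDerivAt_mul_const x).const_sub (-x ^ 2 / 2)).exp.const_mul (x ^ k)
      |>.congr_deriv ?_
    ring

lemma tiltedMoment_add_two (k : ℕ) (c : ℝ) :
    tiltedMoment (k + 2) c + c * tiltedMoment (k + 1) c = (k + 1) * tiltedMoment k c := by
  set w : ℝ → ℝ := fun x => exp (-x ^ 2 / 2 - c * x)
  have hint (j : ℕ) : IntegrableOn (fun x => x ^ j * w x) (Ioi 0) :=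
    integrableOn_pow_mul_exp_quadratic j c
  have hderiv (x : ℝ) : HasDerivAt (fun x => x ^ (k + 1) * w x)
      ((k + 1) * (x ^ k * w x) - (x ^ (k + 2) * w x + c * (x ^ (k + 1) * w x))) x := by
    have hw : HasDerivAt w (w x * (-x - c)) x := by
      refine (((hasDerivAt_pow 2 x).neg.div_const 2).sub ((hasDerivAt_id x).const_mul c)).exp
        |>.congr_deriv ?_
      simp only [w, Pi.sub_apply, Pi.neg_apply, id]
      push_cast
      ring
    refine ((hasDerivAt_pow (k + 1) x).mul hw).congr_deriv ?_
    push_cast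
    ring
  have hderiv_int : IntegrableOn (fun x => (k + 1) * (x ^ k * w x)
      - (x ^ (k + 2) * w x + c * (x ^ (k + 1) * w x))) (Ioi 0) :=
    ((hint k).const_mul _).sub ((hint (k + 2)).add ((hint (k + 1)).const_mul c))
  have hlim := tendsto_zero_of_hasDerivAt_of_integrableOn_Ioi (fun x _ => hderiv x) hderiv_int
    (hint (k + 1))
  have hibp := integral_Ioi_of_hasDerivAt_of_tendsto' (fun x _ => hderiv x) hderiv_int hlim
  rw [integral_sub ?_ ?_, integral_add ?_ ?_, integral_const_mul, integral_const_mul] at hibp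
  · rw [zero_pow k.succ_ne_zero, zero_mul, sub_zero] at hibp
    exact (sub_eq_zero.1 hibp).symm
  all_goals first
    | exact hint _
    | exact (hint _).const_mul _
    | exact (hint _).add ((hint _).const_mul _)

lemma tiltedMoment_one_sq_lt (c : ℝ) :
    tiltedMoment 1 c ^ 2 < tiltedMoment 0 c * tiltedMoment 2 c := by
  set w : ℝ → ℝ := fun x => exp (-x ^ 2 / 2 - c * x)
  set M : ℕ → ℝ := fun k => tiltedMoment k c
  have hint (j : ℕ) : IntegrableOn (fun x => x ^ j * w x) (Ioi 0) :=
    integrableOn_pow_mul_exp_quadratic j c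
  have hM0 : 0 < M 0 := tiltedMoment_pos 0 c
  -- `∫ (M 1 - M 0 x)² w = M 0 (M 0 M 2 - M 1²)`
  have hvar : 0 < ∫ x in Ioi 0,
      (M 1 ^ 2 * (x ^ 0 * w x) - 2 * M 0 * M 1 * (x ^ 1 * w x) + M 0 ^ 2 * (x ^ 2 * w x)) := by
    refine integral_pos_of_ae_pos (by simp) (((hint 0).const_mul _).sub ((hint 1).const_mul _)
      |>.add ((hint 2).const_mul _)) ?_
    filter_upwards [(volume.restrict (Ioi 0)).ae_ne (M 1 / M 0)] with x hx
    have : M 1 - M 0 * x ≠ 0 := by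
      contrapose! hx
      field_simp
      linarith
    calc (0 : ℝ) < (M 1 - M 0 * x) ^ 2 * w x := by positivity
      _ = _ := by ring
  rw [integral_add ?_ ?_, integral_sub ?_ ?_, integral_const_mul, integral_const_mul,
    integral_const_mul] at hvar
  · change 0 < M 1 ^ 2 * M 0 - 2 * M 0 * M 1 * M 1 + M 0 ^ 2 * M 2 at hvar
    nlinarith
  all_goals first
    | exact (hint _).const_mul _
    | exact ((hint _).const_mul _).sub ((hint _).const_mul _)

lemma integral_mul_add_mul_exp_eq_tiltedMoment_zero (c : ℝ) :
    ∫ x in Ioi (0:ℝ), x * (x + c) * exp (-x ^ 2 / 2 - c * x) = tiltedMoment 0 c := by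
  have hint (j : ℕ) := integrableOn_pow_mul_exp_quadratic j c
  calc ∫ x in Ioi (0:ℝ), x * (x + c) * exp (-x ^ 2 / 2 - c * x)
      = ∫ x in Ioi (0:ℝ), (x ^ 2 * exp (-x ^ 2 / 2 - c * x)
          + c * (x ^ 1 * exp (-x ^ 2 / 2 - c * x))) := by
        congr with x
        ring
    _ = tiltedMoment 2 c + c * tiltedMoment 1 c := by
        rw [integral_add (hint 2) ((hint 1).const_mul c), integral_const_mul]
        rfl
    _ = tiltedMoment 0 c := by simpa using tiltedMoment_add_two 0 c

theorem stmt9 (f₂ : ℝ → ℝ)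
    (hf₂ : ∀ c : ℝ, f₂ c =
      (∫ x in Set.Ioi (0:ℝ), x * (x + c) * Real.exp (-x^2/2 - c*x)) /
      (∫ x in Set.Ioi (0:ℝ), x * Real.exp (-x^2/2 - c*x))) :
    ∀ c : ℝ, 0 ≤ c → 0 < deriv f₂ c := by
  intro c _
  have hf : f₂ = tiltedMoment 0 / tiltedMoment 1 := by
    funext b
    rw [hf₂, integral_mul_add_mul_exp_eq_tiltedMoment_zero, Pi.div_apply]
    simp only [tiltedMoment, pow_one]
  have hM1 := tiltedMoment_pos 1 c
  rw [hf, ((hasDerivAt_tiltedMoment 0 c).div (hasDerivAt_tiltedMoment 1 c) hM1.ne').deriv]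
  refine div_pos ?_ (by positivity)
  nlinarith [tiltedMoment_one_sq_lt c]
end

section
/- Fix 0 < m < 1 and for c ≥ 0 let g_{m,c}(y) = y²/2 for y ≤ c and g_{m,c}(y) = m y²/2 + (1−m)cy + (m−1)c²/2 for y > c. Define a(c) = ∫_0^∞ e^{-g_{m,c}(y)} dy and b₁(c) = ∫_0^∞ y e^{-g_{m,c}(y)} dy. Then f₃(c) = b₁(c)/a(c) is strictly decreasing in c. -/
/-!
For `c₁ < c₂` write `v = exp (-g_{m,c₁})` and `w = exp (-g_{m,c₂})`. The difference
`g_{m,c₂} - g_{m,c₁}` is nondecreasing, and strictly increasing on `(c₁, ∞)`, so the likelihood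
ratio `w / v` is nonincreasing: `v x w y ≤ w x v y` for `x ≤ y`. Chebyshev's symmetrisation then
gives
`∫∫ (y - x) (v x w y - w x v y) dx dy = 2 (a(c₁) b₁(c₂) - b₁(c₁) a(c₂))`
with a nonpositive integrand that is negative on `{c₁ < x < y}`, hence
`b₁(c₂) / a(c₂) < b₁(c₁) / a(c₁)`.
-/

open MeasureTheory Real Set

section LikelihoodRatio

variable {μ : Measure ℝ} {v w : ℝ → ℝ}

lemma sub_mul_sub_eq_mul_prod (p : ℝ × ℝ) :
    (p.2 - p.1) * (v p.1 * w p.2 - w p.1 * v p.2) =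
      v p.1 * (p.2 * w p.2) - p.1 * v p.1 * w p.2 - w p.1 * (p.2 * v p.2) +
        p.1 * w p.1 * v p.2 := by
  ring

lemma integrable_sub_mul_sub_prod (hv : Integrable v μ) (hw : Integrable w μ)
    (hxv : Integrable (fun x => x * v x) μ) (hxw : Integrable (fun x => x * w x) μ) :
    Integrable (fun p : ℝ × ℝ => (p.2 - p.1) * (v p.1 * w p.2 - w p.1 * v p.2)) (μ.prod μ) := by
  simp only [sub_mul_sub_eq_mul_prod]
  exact (((hv.mul_prod hxw).sub (hxv.mul_prod hw)).sub (hw.mul_prod hxv)).add (hxw.mul_prod hv)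

lemma integral_sub_mul_sub_prod [SFinite μ] (hv : Integrable v μ) (hw : Integrable w μ)
    (hxv : Integrable (fun x => x * v x) μ) (hxw : Integrable (fun x => x * w x) μ) :
    ∫ p, (p.2 - p.1) * (v p.1 * w p.2 - w p.1 * v p.2) ∂(μ.prod μ) =
      2 * ((∫ x, v x ∂μ) * (∫ x, x * w x ∂μ) - (∫ x, x * v x ∂μ) * ∫ x, w x ∂μ) := by
  have h₁ := hv.mul_prod hxw
  have h₂ := hxv.mul_prod hw
  have h₃ := hw.mul_prod hxv
  have h₁₂ : Integrable (fun p : ℝ × ℝ => v p.1 * (p.2 * w p.2) - p.1 * v p.1 * w p.2)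
      (μ.prod μ) := h₁.sub h₂
  have h₁₂₃ : Integrable (fun p : ℝ × ℝ =>
      v p.1 * (p.2 * w p.2) - p.1 * v p.1 * w p.2 - w p.1 * (p.2 * v p.2)) (μ.prod μ) :=
    h₁₂.sub h₃
  simp only [sub_mul_sub_eq_mul_prod]
  rw [integral_add h₁₂₃ (hxw.mul_prod hv), integral_sub h₁₂ h₃, integral_sub h₁ h₂,
    integral_prod_mul v (fun y => y * w y), integral_prod_mul (fun x => x * v x) w,
    integral_prod_mul w (fun y => y * v y), integral_prod_mul (fun x => x * w x) v]
  ring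

lemma sub_mul_sub_nonpos (hle : ∀ x y, x ≤ y → v x * w y ≤ w x * v y) (x y : ℝ) :
    (y - x) * (v x * w y - w x * v y) ≤ 0 := by
  rcases le_total x y with hxy | hyx
  · exact mul_nonpos_of_nonneg_of_nonpos (sub_nonneg.2 hxy) (sub_nonpos.2 (hle x y hxy))
  · have := hle y x hyx
    exact mul_nonpos_of_nonpos_of_nonneg (sub_nonpos.2 hyx) (by linarith)

lemma integral_sub_mul_sub_prod_neg [SFinite μ] (hv : Integrable v μ) (hw : Integrable w μ)
    (hxv : Integrable (fun x => x * v x) μ) (hxw : Integrable (fun x => x * w x) μ)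
    (hle : ∀ x y, x ≤ y → v x * w y ≤ w x * v y)
    (hlt : 0 < (μ.prod μ) {p | p.1 < p.2 ∧ v p.1 * w p.2 < w p.1 * v p.2}) :
    ∫ p, (p.2 - p.1) * (v p.1 * w p.2 - w p.1 * v p.2) ∂(μ.prod μ) < 0 := by
  set F : ℝ × ℝ → ℝ := fun p => (p.2 - p.1) * (v p.1 * w p.2 - w p.1 * v p.2)
  have hF : Integrable F (μ.prod μ) := integrable_sub_mul_sub_prod hv hw hxv hxw
  have hsupp : {p | p.1 < p.2 ∧ v p.1 * w p.2 < w p.1 * v p.2} ⊆ Function.support (-F) :=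
    fun p ⟨hxy, hvw⟩ => neg_ne_zero.2 (mul_neg_of_pos_of_neg (sub_pos.2 hxy) (sub_neg.2 hvw)).ne
  have hpos : 0 < ∫ p, (-F) p ∂(μ.prod μ) :=
    (integral_pos_iff_support_of_nonneg_ae
      (Filter.Eventually.of_forall fun p => neg_nonneg.2 (sub_mul_sub_nonpos hle p.1 p.2))
      hF.neg).2 (hlt.trans_le (measure_mono hsupp))
  rw [integral_neg'] at hpos
  exact neg_pos.1 hpos

theorem integral_mul_div_integral_lt_of_ratio_anti [SFinite μ] (hv : Integrable v μ)
    (hw : Integrable w μ) (hxv : Integrable (fun x => x * v x) μ)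
    (hxw : Integrable (fun x => x * w x) μ)
    (hv₀ : 0 < ∫ x, v x ∂μ) (hw₀ : 0 < ∫ x, w x ∂μ)
    (hle : ∀ x y, x ≤ y → v x * w y ≤ w x * v y)
    (hlt : 0 < (μ.prod μ) {p | p.1 < p.2 ∧ v p.1 * w p.2 < w p.1 * v p.2}) :
    (∫ x, x * w x ∂μ) / ∫ x, w x ∂μ < (∫ x, x * v x ∂μ) / ∫ x, v x ∂μ := by
  have := integral_sub_mul_sub_prod_neg hv hw hxv hxw hle hlt
  rw [integral_sub_mul_sub_prod hv hw hxv hxw] at this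
  rw [div_lt_div_iff₀ hw₀ hv₀]
  linarith

end LikelihoodRatio

noncomputable def piecewiseQuadratic (m c y : ℝ) : ℝ :=
  if y ≤ c then y ^ 2 / 2 else m * y ^ 2 / 2 + (1 - m) * c * y + (m - 1) * c ^ 2 / 2

/-- `(1 - m) * ramp c₁ c₂` is `g_{m,c₂} - g_{m,c₁}`: its derivative is the clamp of `t - c₁` to
`[0, c₂ - c₁]`, which is where the two second derivatives `1` and `m` disagree. -/
noncomputable def ramp (c₁ c₂ t : ℝ) : ℝ :=
  if t ≤ c₁ then 0 else if t ≤ c₂ then (t - c₁) ^ 2 / 2 else (c₂ - c₁) * t - (c₂ ^ 2 - c₁ ^ 2) / 2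

section PiecewiseQuadratic

variable {m c c₁ c₂ : ℝ}

lemma measurable_piecewiseQuadratic (m c : ℝ) : Measurable (piecewiseQuadratic m c) :=
  Measurable.ite (measurableSet_le measurable_id measurable_const) (by fun_prop) (by fun_prop)

lemma mul_sq_le_piecewiseQuadratic (hm : m ≤ 1) (hc : 0 ≤ c) (y : ℝ) :
    m / 2 * y ^ 2 ≤ piecewiseQuadratic m c y := by
  unfold piecewiseQuadratic
  split_ifs with h
  · nlinarith [sq_nonneg y]
  · nlinarith [mul_le_mul_of_nonneg_left (not_le.1 h).le hc]

lemma piecewiseQuadratic_sub_eq (h : c₁ ≤ c₂) (t : ℝ) :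
    piecewiseQuadratic m c₂ t - piecewiseQuadratic m c₁ t = (1 - m) * ramp c₁ c₂ t := by
  unfold piecewiseQuadratic ramp
  split_ifs <;> linarith

lemma monotone_ramp (h : c₁ ≤ c₂) : Monotone (ramp c₁ c₂) := by
  intro x y hxy
  unfold ramp
  split_ifs <;> nlinarith

lemma strictMonoOn_ramp (h : c₁ < c₂) : StrictMonoOn (ramp c₁ c₂) (Ioi c₁) := by
  intro x hx y hy hxy
  simp only [mem_Ioi] at hx hy
  unfold ramp
  split_ifs <;> nlinarith

lemma monotone_piecewiseQuadratic_sub (hm : m ≤ 1) (h : c₁ ≤ c₂) :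
    Monotone fun t => piecewiseQuadratic m c₂ t - piecewiseQuadratic m c₁ t := by
  simp only [piecewiseQuadratic_sub_eq h]
  exact (monotone_ramp h).const_mul (sub_nonneg.2 hm)

lemma strictMonoOn_piecewiseQuadratic_sub (hm : m < 1) (h : c₁ < c₂) :
    StrictMonoOn (fun t => piecewiseQuadratic m c₂ t - piecewiseQuadratic m c₁ t) (Ioi c₁) := by
  simp only [piecewiseQuadratic_sub_eq h.le]
  exact fun x hx y hy hxy => mul_lt_mul_of_pos_left (strictMonoOn_ramp h hx hy hxy) (sub_pos.2 hm)

lemma integrable_exp_neg_piecewiseQuadratic (hm₀ : 0 < m) (hm₁ : m ≤ 1) (hc : 0 ≤ c) :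
    Integrable fun y => exp (-piecewiseQuadratic m c y) := by
  refine (integrable_exp_neg_mul_sq (half_pos hm₀)).mono
    (measurable_piecewiseQuadratic m c).neg.exp.aestronglyMeasurable (ae_of_all _ fun y => ?_)
  simp only [norm_eq_abs, abs_exp, exp_le_exp]
  linarith [mul_sq_le_piecewiseQuadratic hm₁ hc y]

lemma integrable_mul_exp_neg_piecewiseQuadratic (hm₀ : 0 < m) (hm₁ : m ≤ 1) (hc : 0 ≤ c) :
    Integrable fun y => y * exp (-piecewiseQuadratic m c y) := by
  refine (integrable_mul_exp_neg_mul_sq (half_pos hm₀)).mono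
    (measurable_id.mul (measurable_piecewiseQuadratic m c).neg.exp).aestronglyMeasurable
    (ae_of_all _ fun y => ?_)
  simp only [norm_mul, norm_eq_abs, abs_exp]
  gcongr
  linarith [mul_sq_le_piecewiseQuadratic hm₁ hc y]

lemma exp_neg_piecewiseQuadratic_mul_le (hm : m ≤ 1) (h : c₁ ≤ c₂) {x y : ℝ} (hxy : x ≤ y) :
    exp (-piecewiseQuadratic m c₁ x) * exp (-piecewiseQuadratic m c₂ y) ≤
      exp (-piecewiseQuadratic m c₂ x) * exp (-piecewiseQuadratic m c₁ y) := by
  rw [← exp_add, ← exp_add, exp_le_exp]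
  linarith [monotone_piecewiseQuadratic_sub hm h hxy]

lemma exp_neg_piecewiseQuadratic_mul_lt (hm : m < 1) (h : c₁ < c₂) {x y : ℝ} (hx : c₁ < x)
    (hxy : x < y) :
    exp (-piecewiseQuadratic m c₁ x) * exp (-piecewiseQuadratic m c₂ y) <
      exp (-piecewiseQuadratic m c₂ x) * exp (-piecewiseQuadratic m c₁ y) := by
  rw [← exp_add, ← exp_add, exp_lt_exp]
  linarith [strictMonoOn_piecewiseQuadratic_sub hm h hx (hx.trans hxy) hxy]

end PiecewiseQuadratic

lemma measure_restrict_Ioi_prod_setOf_lt_lt_pos {a c : ℝ} (hc : a ≤ c) :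
    0 < ((volume.restrict (Ioi a)).prod (volume.restrict (Ioi a)))
      {p : ℝ × ℝ | c < p.1 ∧ p.1 < p.2} := by
  have hbox : Ioo (c + 1) (c + 2) ×ˢ Ioo (c + 2) (c + 3) ⊆ {p : ℝ × ℝ | c < p.1 ∧ p.1 < p.2} :=
    fun p ⟨⟨h₁, h₂⟩, ⟨h₃, _⟩⟩ => ⟨by linarith, h₂.trans h₃⟩
  refine lt_of_lt_of_le ?_ (measure_mono hbox)
  have hIoo {r s : ℝ} (hr : a ≤ r) : Ioo r s ⊆ Ioi a :=
    Ioo_subset_Ioi_self.trans (Ioi_subset_Ioi hr)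
  rw [Measure.prod_prod, Measure.restrict_eq_self _ (hIoo (by linarith)),
    Measure.restrict_eq_self _ (hIoo (by linarith))]
  norm_num

theorem stmt10 (m : ℝ) (hm0 : 0 < m) (hm1 : m < 1)
    (g : ℝ → ℝ → ℝ)
    (hg : ∀ c y : ℝ, g c y =
      if y ≤ c then y^2/2 else m*y^2/2 + (1-m)*c*y + (m-1)*c^2/2)
    (a b₁ : ℝ → ℝ)
    (ha : ∀ c, a c = ∫ y in Set.Ioi (0:ℝ), Real.exp (-(g c y)))
    (hb : ∀ c, b₁ c = ∫ y in Set.Ioi (0:ℝ), y * Real.exp (-(g c y))) :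
    StrictAntiOn (fun c => b₁ c / a c) (Set.Ici 0) := by
  obtain rfl : g = piecewiseQuadratic m := funext₂ hg
  intro c₁ (hc₁ : 0 ≤ c₁) c₂ (hc₂ : 0 ≤ c₂) h
  simp only [ha, hb]
  have : NeZero (volume.restrict (Ioi (0 : ℝ))) := ⟨by simp⟩
  refine integral_mul_div_integral_lt_of_ratio_anti
    (integrable_exp_neg_piecewiseQuadratic hm0 hm1.le hc₁).restrict
    (integrable_exp_neg_piecewiseQuadratic hm0 hm1.le hc₂).restrict
    (integrable_mul_exp_neg_piecewiseQuadratic hm0 hm1.le hc₁).restrict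
    (integrable_mul_exp_neg_piecewiseQuadratic hm0 hm1.le hc₂).restrict
    (integral_exp_pos (integrable_exp_neg_piecewiseQuadratic hm0 hm1.le hc₁).restrict)
    (integral_exp_pos (integrable_exp_neg_piecewiseQuadratic hm0 hm1.le hc₂).restrict)
    (fun x y => exp_neg_piecewiseQuadratic_mul_le hm1.le h.le)
    ((measure_restrict_Ioi_prod_setOf_lt_lt_pos hc₁).trans_le (measure_mono ?_))
  exact fun p ⟨hx, hxy⟩ => ⟨hxy, exp_neg_piecewiseQuadratic_mul_lt hm1 h hx hxy⟩
end

section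
/- Let g: ℝ → ℝ be an (M_1, M_2)-admissible convex function (g(0)=g'(0)=0, piecewise C^2, M_1 ≤ g'' ≤ M_2 with 0 < M_1 < M_2). Let t̄(g) = ∫_ℝ t e^{-g(t)} dt / ∫_ℝ e^{-g(t)} dt be the center of mass. Then |t̄(g)| ≤ √(2/(π M_1)) (1 − 1/√m), where m = M_2/M_1. -/
/-!
Let `c = √(2/π) (1/√M₁ - 1/√M₂)` (the right-hand side) and `K = 1/√(M₁ M₂)`. Splitting
`∫ (t ± c) e^{-g}` at `0` and reflecting the negative half-line, it suffices to show
`∫₀^∞ (t - c) e^{-h} ≤ K ≤ ∫₀^∞ (t + c) e^{-h}` for `h = g` and `h = g(-·)`; `c` is exactly the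
shift for which both extremal Gaussians give the value `K`. The right inequality holds pointwise,
since `h ≤ M₂ t²/2`. For the left one write `e^{-h} = e^{-M₁ t²/2} ρ`, where
`ρ = e^{M₁ t²/2 - h}` is nonincreasing with `ρ 0 = 1`: the weight `(t - c) e^{-M₁ t²/2}` has
nonnegative tail integrals, so multiplying it by `ρ` can only decrease its integral
(second mean value theorem).
-/

open MeasureTheory Real Set
open Filter

theorem le_of_le_of_hasDerivAt_le {f k f' k' : ℝ → ℝ} {a x : ℝ} (hf : ContinuousOn f (Ici a))
    (hk : ContinuousOn k (Ici a)) (hf' : ∀ t, a < t → HasDerivAt f (f' t) t)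
    (hk' : ∀ t, a < t → HasDerivAt k (k' t) t) (hle : ∀ t, a < t → f' t ≤ k' t)
    (ha : f a ≤ k a) (hx : a ≤ x) : f x ≤ k x := by
  have hmono : MonotoneOn (fun t => k t - f t) (Ici a) := by
    refine monotoneOn_of_hasDerivWithinAt_nonneg (f' := fun t => k' t - f' t) (convex_Ici a)
      (hk.sub hf) (fun t ht => ?_) (fun t ht => ?_)
    · rw [interior_Ici] at ht
      exact ((hk' t ht).sub (hf' t ht)).hasDerivWithinAt
    · rw [interior_Ici] at ht
      exact sub_nonneg.2 (hle t ht)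
  linarith [hmono (mem_Ici.2 le_rfl) hx hx]

theorem hasDerivAt_half_mul_sq (M t : ℝ) : HasDerivAt (fun t => M / 2 * t ^ 2) (M * t) t :=
  ((hasDerivAt_pow 2 t).const_mul (M / 2)).congr_deriv (by norm_num; ring)

section QuadraticBounds

variable {h h' : ℝ → ℝ} {M : ℝ}

theorem half_mul_sq_le_of_mul_le_deriv (hh : Continuous h) (h0 : h 0 = 0)
    (hd : ∀ t, 0 < t → HasDerivAt h (h' t) t) (hM : ∀ t, 0 < t → M * t ≤ h' t) {t : ℝ}
    (ht : 0 ≤ t) : M / 2 * t ^ 2 ≤ h t :=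
  le_of_le_of_hasDerivAt_le (by fun_prop) hh.continuousOn
    (fun t _ => hasDerivAt_half_mul_sq M t) hd hM (by simp [h0]) ht

theorem le_half_mul_sq_of_deriv_le_mul (hh : Continuous h) (h0 : h 0 = 0)
    (hd : ∀ t, 0 < t → HasDerivAt h (h' t) t) (hM : ∀ t, 0 < t → h' t ≤ M * t) {t : ℝ}
    (ht : 0 ≤ t) : h t ≤ M / 2 * t ^ 2 :=
  le_of_le_of_hasDerivAt_le hh.continuousOn (by fun_prop) hd
    (fun t _ => hasDerivAt_half_mul_sq M t) hM (by simp [h0]) ht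

end QuadraticBounds

section Integrability

variable {h : ℝ → ℝ} {b : ℝ}

theorem integrable_exp_neg_of_mul_sq_le (hb : 0 < b) (hh : Continuous h)
    (hlow : ∀ t, b * t ^ 2 ≤ h t) : Integrable fun t => exp (-h t) := by
  refine (integrable_exp_neg_mul_sq hb).mono' (by fun_prop) (ae_of_all _ fun t => ?_)
  rw [norm_of_nonneg (exp_pos _).le]
  exact exp_le_exp.2 (by linarith [hlow t])

theorem integrable_mul_exp_neg_of_mul_sq_le (hb : 0 < b) (hh : Continuous h)
    (hlow : ∀ t, b * t ^ 2 ≤ h t) : Integrable fun t => t * exp (-h t) := by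
  refine (integrable_mul_exp_neg_mul_sq hb).norm.mono' (by fun_prop) (ae_of_all _ fun t => ?_)
  simp only [norm_mul, norm_of_nonneg (exp_pos _).le]
  exact mul_le_mul_of_nonneg_left (exp_le_exp.2 (by linarith [hlow t])) (norm_nonneg t)

theorem integrable_add_mul_exp_neg_of_mul_sq_le (hb : 0 < b) (hh : Continuous h)
    (hlow : ∀ t, b * t ^ 2 ≤ h t) (a : ℝ) : Integrable fun t => (t + a) * exp (-h t) := by
  refine ((integrable_mul_exp_neg_of_mul_sq_le hb hh hlow).add
    ((integrable_exp_neg_of_mul_sq_le hb hh hlow).const_mul a)).congr (ae_of_all _ fun t => ?_)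
  simp only [Pi.add_apply, add_mul]

theorem integrable_add_mul_gaussian {M : ℝ} (hM : 0 < M) (a : ℝ) :
    Integrable fun t => (t + a) * exp (-(M / 2 * t ^ 2)) :=
  integrable_add_mul_exp_neg_of_mul_sq_le (h := fun t => M / 2 * t ^ 2) (half_pos hM)
    (by fun_prop) (fun _ => le_rfl) a

end Integrability

theorem integral_Ioi_mul_exp_neg_mul_sq {b : ℝ} (hb : 0 < b) :
    ∫ x in Ioi (0 : ℝ), x * exp (-b * x ^ 2) = (2 * b)⁻¹ := by
  have h := integral_mul_cexp_neg_mul_sq (b := (b : ℂ)) (by simpa using hb)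
  rw [← Complex.ofReal_inj, ← integral_complex_ofReal]
  push_cast
  exact h

theorem integral_Ioi_add_mul_gaussian {M : ℝ} (hM : 0 < M) (a : ℝ) :
    ∫ t in Ioi (0 : ℝ), (t + a) * exp (-(M / 2 * t ^ 2)) = 1 / M + a * √(π / 2) / √M := by
  have hb : 0 < M / 2 := half_pos hM
  simp only [add_mul, ← neg_mul]
  rw [integral_add (integrable_mul_exp_neg_mul_sq hb).integrableOn
    ((integrable_exp_neg_mul_sq hb).const_mul a).integrableOn, integral_const_mul,
    integral_Ioi_mul_exp_neg_mul_sq hb, integral_gaussian_Ioi,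
    show π / (M / 2) = 2 ^ 2 * (π / 2 / M) by field_simp, sqrt_mul' _ (by positivity),
    sqrt_sq zero_le_two, sqrt_div' _ hM.le]
  ring

theorem intervalIntegral_le_setIntegral_Ioi_of_sign_change {φ : ℝ → ℝ} {c t : ℝ}
    (hφ : IntegrableOn φ (Ioi 0)) (hneg : ∀ s, 0 < s → s ≤ c → φ s ≤ 0)
    (hpos : ∀ s, c < s → 0 ≤ φ s) (htot : 0 ≤ ∫ s in Ioi 0, φ s) (ht : 0 ≤ t) :
    ∫ s in 0..t, φ s ≤ ∫ s in Ioi 0, φ s := by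
  rcases le_or_gt t c with htc | htc
  · have : ∫ s in 0..t, φ s ≤ 0 := by
      rw [intervalIntegral.integral_of_le ht]
      exact setIntegral_nonpos measurableSet_Ioc fun s hs => hneg s hs.1 (hs.2.trans htc)
    linarith
  · have : 0 ≤ ∫ s in Ioi t, φ s :=
      setIntegral_nonneg measurableSet_Ioi fun s hs => hpos s (htc.trans hs)
    linarith [intervalIntegral.integral_Ioi_sub_Ioi hφ ht]

section SecondMeanValue

variable {φ ρ ρ' : ℝ → ℝ}

theorem intervalIntegral_mul_le_of_hasDerivAt_nonpos (hφ : Continuous φ)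
    (hpartial : ∀ t, 0 ≤ t → ∫ s in 0..t, φ s ≤ ∫ s in Ioi 0, φ s) (hρ : Continuous ρ)
    (hρ' : ∀ t, 0 < t → HasDerivAt ρ (ρ' t) t) (hρ'_nonpos : ∀ t, 0 < t → ρ' t ≤ 0)
    (hρ_nonneg : ∀ t, 0 ≤ t → 0 ≤ ρ t) (hρ0 : ρ 0 ≤ 1) {T : ℝ} (hT : 0 ≤ T) :
    ∫ s in 0..T, φ s * ρ s ≤ ∫ s in Ioi 0, φ s := by
  set F : ℝ → ℝ := fun t => (∫ s in Ioi 0, φ s) - ∫ s in 0..t, φ s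
  have hF : ∀ t, HasDerivAt F (-φ t) t := fun t =>
    ((hφ.integral_hasStrictDerivAt 0 t).hasDerivAt).const_sub _
  have hP : ∀ t, HasDerivAt (fun t => ∫ s in 0..t, φ s * ρ s) (φ t * ρ t) t := fun t =>
    ((hφ.mul hρ).integral_hasStrictDerivAt 0 t).hasDerivAt
  have hF_nonneg : ∀ t, 0 ≤ t → 0 ≤ F t := fun t ht => sub_nonneg.2 (hpartial t ht)
  -- `w` is `∫₀ᵗ φ ρ` plus the boundary term of an integration by parts; `w' = ρ' F ≤ 0`.
  set w : ℝ → ℝ := fun t => ρ t * F t + ∫ s in 0..t, φ s * ρ s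
  have hw : AntitoneOn w (Ici 0) := by
    refine antitoneOn_of_hasDerivWithinAt_nonpos (f' := fun t => ρ' t * F t) (convex_Ici 0)
      ?_ (fun t ht => ?_) (fun t ht => ?_)
    · exact ((hρ.mul (continuous_iff_continuousAt.2 fun t => (hF t).continuousAt)).add
        (continuous_iff_continuousAt.2 fun t => (hP t).continuousAt)).continuousOn
    · rw [interior_Ici] at ht
      exact (((hρ' t ht).mul (hF t)).add (hP t)).hasDerivWithinAt.congr_deriv (by ring)
    · rw [interior_Ici] at ht
      exact mul_nonpos_of_nonpos_of_nonneg (hρ'_nonpos t ht) (hF_nonneg t ht.le)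
  have hw0 : w 0 ≤ ∫ s in Ioi 0, φ s := by
    have htot := hpartial 0 le_rfl
    simp only [w, F, intervalIntegral.integral_same, sub_zero, add_zero] at htot ⊢
    exact mul_le_of_le_one_left htot hρ0
  have hwT := hw (mem_Ici.2 le_rfl) hT hT
  have hbdry : 0 ≤ ρ T * F T := mul_nonneg (hρ_nonneg T hT) (hF_nonneg T hT)
  simp only [w] at hwT hw0
  linarith

theorem setIntegral_Ioi_mul_le_of_hasDerivAt_nonpos (hφ : Continuous φ)
    (hpartial : ∀ t, 0 ≤ t → ∫ s in 0..t, φ s ≤ ∫ s in Ioi 0, φ s) (hρ : Continuous ρ)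
    (hρ' : ∀ t, 0 < t → HasDerivAt ρ (ρ' t) t) (hρ'_nonpos : ∀ t, 0 < t → ρ' t ≤ 0)
    (hρ_nonneg : ∀ t, 0 ≤ t → 0 ≤ ρ t) (hρ0 : ρ 0 ≤ 1)
    (hint : IntegrableOn (fun s => φ s * ρ s) (Ioi 0)) :
    ∫ s in Ioi 0, φ s * ρ s ≤ ∫ s in Ioi 0, φ s :=
  le_of_tendsto (intervalIntegral_tendsto_integral_Ioi 0 hint tendsto_id)
    (eventually_atTop.2 ⟨0, fun _ hT => intervalIntegral_mul_le_of_hasDerivAt_nonpos hφ hpartial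
      hρ hρ' hρ'_nonpos hρ_nonneg hρ0 hT⟩)

end SecondMeanValue

section GaussianComparison

variable {h : ℝ → ℝ} {M a : ℝ}

theorem setIntegral_Ioi_add_mul_exp_neg_le_gaussian {h' : ℝ → ℝ} (hM : 0 < M)
    (hh : Continuous h) (h0 : h 0 = 0) (hd : ∀ t, 0 < t → HasDerivAt h (h' t) t)
    (hh' : ∀ t, 0 < t → M * t ≤ h' t)
    (hint : IntegrableOn (fun t => (t + a) * exp (-h t)) (Ioi 0))
    (htot : 0 ≤ ∫ t in Ioi 0, (t + a) * exp (-(M / 2 * t ^ 2))) :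
    ∫ t in Ioi 0, (t + a) * exp (-h t) ≤ ∫ t in Ioi 0, (t + a) * exp (-(M / 2 * t ^ 2)) := by
  have hφρ : (fun t => (t + a) * exp (-(M / 2 * t ^ 2)) * exp (M / 2 * t ^ 2 - h t)) =
      fun t => (t + a) * exp (-h t) := by
    ext t
    rw [mul_assoc, ← exp_add]
    ring_nf
  rw [← hφρ] at hint ⊢
  refine setIntegral_Ioi_mul_le_of_hasDerivAt_nonpos (by fun_prop) (fun t ht => ?_)
    (by fun_prop) (fun t ht => ((hasDerivAt_half_mul_sq M t).sub (hd t ht)).exp)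
    (fun t ht => mul_nonpos_of_nonneg_of_nonpos (exp_pos _).le (by linarith [hh' t ht]))
    (fun t _ => (exp_pos _).le) (by simp [h0]) hint
  refine intervalIntegral_le_setIntegral_Ioi_of_sign_change
    (integrable_add_mul_gaussian hM a).integrableOn (c := -a) (fun s _ hs => ?_)
    (fun s hs => ?_) htot ht
  · exact mul_nonpos_of_nonpos_of_nonneg (by linarith) (exp_pos _).le
  · exact mul_nonneg (by linarith) (exp_pos _).le

theorem gaussian_le_setIntegral_Ioi_add_mul_exp_neg (hM : 0 < M) (ha : 0 ≤ a)
    (hint : IntegrableOn (fun t => (t + a) * exp (-h t)) (Ioi 0))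
    (hh : ∀ t, 0 < t → h t ≤ M / 2 * t ^ 2) :
    ∫ t in Ioi 0, (t + a) * exp (-(M / 2 * t ^ 2)) ≤ ∫ t in Ioi 0, (t + a) * exp (-h t) :=
  setIntegral_mono_on (integrable_add_mul_gaussian hM a).integrableOn hint measurableSet_Ioi
    fun t ht => mul_le_mul_of_nonneg_left (exp_le_exp.2 (by linarith [hh t ht]))
      (by linarith [mem_Ioi.1 ht])

end GaussianComparison

noncomputable def centerOfMassBound (M₁ M₂ : ℝ) : ℝ := √(2 / π) * (1 / √M₁ - 1 / √M₂)

section CenterOfMassBound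

variable {M₁ M₂ : ℝ}

theorem centerOfMassBound_nonneg (h1 : 0 < M₁) (h12 : M₁ ≤ M₂) : 0 ≤ centerOfMassBound M₁ M₂ :=
  mul_nonneg (sqrt_nonneg _) (sub_nonneg.2 (one_div_le_one_div_of_le (sqrt_pos.2 h1)
    (sqrt_le_sqrt h12)))

theorem centerOfMassBound_mul_sqrt_pi_div_two :
    centerOfMassBound M₁ M₂ * √(π / 2) = 1 / √M₁ - 1 / √M₂ := by
  rw [centerOfMassBound, mul_right_comm, ← sqrt_mul (by positivity), div_mul_div_comm,
    mul_comm 2 π, div_self (by positivity), sqrt_one, one_mul]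

theorem integral_Ioi_sub_centerOfMassBound_mul_gaussian (h1 : 0 < M₁) (h2 : 0 < M₂) :
    ∫ t in Ioi 0, (t + -centerOfMassBound M₁ M₂) * exp (-(M₁ / 2 * t ^ 2)) =
      1 / (√M₁ * √M₂) := by
  have hs1 := sqrt_pos.2 h1
  have hs2 := sqrt_pos.2 h2
  rw [integral_Ioi_add_mul_gaussian h1, neg_mul, centerOfMassBound_mul_sqrt_pi_div_two]
  field_simp
  linear_combination √M₂ * sq_sqrt h1.le

theorem integral_Ioi_add_centerOfMassBound_mul_gaussian (h1 : 0 < M₁) (h2 : 0 < M₂) :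
    ∫ t in Ioi 0, (t + centerOfMassBound M₁ M₂) * exp (-(M₂ / 2 * t ^ 2)) =
      1 / (√M₁ * √M₂) := by
  have hs1 := sqrt_pos.2 h1
  have hs2 := sqrt_pos.2 h2
  rw [integral_Ioi_add_mul_gaussian h2, centerOfMassBound_mul_sqrt_pi_div_two]
  field_simp
  linear_combination √M₁ * sq_sqrt h2.le

theorem sqrt_two_div_pi_mul_mul_one_sub_eq_centerOfMassBound (h1 : 0 < M₁) (h2 : 0 < M₂) :
    √(2 / (π * M₁)) * (1 - 1 / √(M₂ / M₁)) = centerOfMassBound M₁ M₂ := by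
  have hs1 := sqrt_pos.2 h1
  have hs2 := sqrt_pos.2 h2
  rw [centerOfMassBound, ← div_div, sqrt_div (by positivity), sqrt_div h2.le]
  field_simp

end CenterOfMassBound

section HalfLine

variable {h h' : ℝ → ℝ} {M₁ M₂ : ℝ}

theorem setIntegral_Ioi_sub_centerOfMassBound_le (h1 : 0 < M₁) (h2 : 0 < M₂) (hh : Continuous h)
    (h0 : h 0 = 0) (hd : ∀ t, 0 < t → HasDerivAt h (h' t) t) (hh' : ∀ t, 0 < t → M₁ * t ≤ h' t)
    (hint : IntegrableOn (fun t => (t + -centerOfMassBound M₁ M₂) * exp (-h t)) (Ioi 0)) :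
    ∫ t in Ioi 0, (t + -centerOfMassBound M₁ M₂) * exp (-h t) ≤ 1 / (√M₁ * √M₂) := by
  have hK := integral_Ioi_sub_centerOfMassBound_mul_gaussian h1 h2
  rw [← hK]
  exact setIntegral_Ioi_add_mul_exp_neg_le_gaussian h1 hh h0 hd hh' hint (by rw [hK]; positivity)

theorem le_setIntegral_Ioi_add_centerOfMassBound (h1 : 0 < M₁) (h12 : M₁ ≤ M₂)
    (hh : Continuous h) (h0 : h 0 = 0) (hd : ∀ t, 0 < t → HasDerivAt h (h' t) t)
    (hh' : ∀ t, 0 < t → h' t ≤ M₂ * t)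
    (hint : IntegrableOn (fun t => (t + centerOfMassBound M₁ M₂) * exp (-h t)) (Ioi 0)) :
    1 / (√M₁ * √M₂) ≤ ∫ t in Ioi 0, (t + centerOfMassBound M₁ M₂) * exp (-h t) := by
  have h2 := h1.trans_le h12
  rw [← integral_Ioi_add_centerOfMassBound_mul_gaussian h1 h2]
  exact gaussian_le_setIntegral_Ioi_add_mul_exp_neg h2 (centerOfMassBound_nonneg h1 h12) hint
    fun t ht => le_half_mul_sq_of_deriv_le_mul hh h0 hd hh' ht.le

end HalfLine

theorem integral_add_mul_exp_neg_eq_sub {g : ℝ → ℝ} (a : ℝ)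
    (hf : Integrable fun t => (t + a) * exp (-g t)) :
    ∫ t, (t + a) * exp (-g t) =
      (∫ t in Ioi 0, (t + a) * exp (-g t)) - ∫ t in Ioi 0, (t + -a) * exp (-g (-t)) := by
  have hrefl := integral_comp_neg_Ioi 0 fun t => (t + a) * exp (-g t)
  rw [neg_zero] at hrefl
  rw [← intervalIntegral.integral_Iic_add_Ioi hf.integrableOn hf.integrableOn, ← hrefl,
    sub_eq_add_neg, ← integral_neg, add_comm]
  congr 2 with t
  ring

section WholeLine

variable {g g' : ℝ → ℝ} {M₁ M₂ : ℝ}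

theorem half_mul_sq_le_of_slope (hg : Continuous g) (hg0 : g 0 = 0)
    (hd : ∀ t, HasDerivAt g (g' t) t) (hslope : ∀ t, 0 < t → M₁ * t ≤ g' t)
    (hslope_neg : ∀ t, 0 < t → M₁ * t ≤ -g' (-t)) (t : ℝ) : M₁ / 2 * t ^ 2 ≤ g t := by
  rcases le_total 0 t with ht | ht
  · exact half_mul_sq_le_of_mul_le_deriv hg hg0 (fun t _ => hd t) hslope ht
  · simpa using half_mul_sq_le_of_mul_le_deriv (hg.comp continuous_neg) (by simpa using hg0)
      (fun t _ => ((hd (-t)).comp t (hasDerivAt_neg t)).congr_deriv (mul_neg_one _))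
      hslope_neg (neg_nonneg.2 ht)

theorem abs_integral_mul_exp_neg_le (h1 : 0 < M₁) (h12 : M₁ ≤ M₂) (hg : Continuous g)
    (hg0 : g 0 = 0) (hd : ∀ t, HasDerivAt g (g' t) t)
    (hslope : ∀ t, 0 < t → M₁ * t ≤ g' t ∧ g' t ≤ M₂ * t)
    (hslope_neg : ∀ t, 0 < t → M₁ * t ≤ -g' (-t) ∧ -g' (-t) ≤ M₂ * t) :
    |∫ t, t * exp (-g t)| ≤ centerOfMassBound M₁ M₂ * ∫ t, exp (-g t) := by
  have h2 := h1.trans_le h12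
  have hquad := half_mul_sq_le_of_slope hg hg0 hd (fun t ht => (hslope t ht).1)
    (fun t ht => (hslope_neg t ht).1)
  have hgr : Continuous fun t => g (-t) := hg.comp continuous_neg
  have hdr : ∀ t, 0 < t → HasDerivAt (fun t => g (-t)) (-g' (-t)) t := fun t _ =>
    ((hd (-t)).comp t (hasDerivAt_neg t)).congr_deriv (mul_neg_one _)
  have hint := integrable_add_mul_exp_neg_of_mul_sq_le (half_pos h1) hg hquad
  have hint_neg := integrable_add_mul_exp_neg_of_mul_sq_le (h := fun t => g (-t)) (half_pos h1)
    hgr (fun t => by simpa using hquad (-t))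
  have hmoment : ∀ a, ∫ t, (t + a) * exp (-g t) = (∫ t, t * exp (-g t)) + a * ∫ t, exp (-g t) :=
    fun a => by
      simp only [add_mul]
      rw [integral_add (integrable_mul_exp_neg_of_mul_sq_le (half_pos h1) hg hquad)
        ((integrable_exp_neg_of_mul_sq_le (half_pos h1) hg hquad).const_mul a), integral_const_mul]
  set c := centerOfMassBound M₁ M₂
  have hsplit_sub := integral_add_mul_exp_neg_eq_sub (-c) (hint _)
  have hsplit_add := integral_add_mul_exp_neg_eq_sub c (hint _)
  rw [neg_neg] at hsplit_sub
  have hg_upper := setIntegral_Ioi_sub_centerOfMassBound_le h1 h2 hg hg0 (fun t _ => hd t)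
    (fun t ht => (hslope t ht).1) (hint _).integrableOn
  have hgr_upper := setIntegral_Ioi_sub_centerOfMassBound_le h1 h2 hgr (by simpa using hg0) hdr
    (fun t ht => (hslope_neg t ht).1) (hint_neg _).integrableOn
  have hg_lower := le_setIntegral_Ioi_add_centerOfMassBound h1 h12 hg hg0 (fun t _ => hd t)
    (fun t ht => (hslope t ht).2) (hint _).integrableOn
  have hgr_lower := le_setIntegral_Ioi_add_centerOfMassBound h1 h12 hgr (by simpa using hg0) hdr
    (fun t ht => (hslope_neg t ht).2) (hint_neg _).integrableOn
  rw [abs_le]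
  constructor <;> linarith [hmoment c, hmoment (-c)]

end WholeLine

theorem stmt11 (g : ℝ → ℝ) (M₁ M₂ : ℝ) (h1 : 0 < M₁) (h12 : M₁ < M₂)
    (hC1 : ContDiff ℝ 1 g) (hg0 : g 0 = 0) (hg'0 : deriv g 0 = 0)
    (hsd : ∀ s t : ℝ, s ≤ t →
      M₁ * (t - s) ≤ deriv g t - deriv g s ∧ deriv g t - deriv g s ≤ M₂ * (t - s)) :
    |(∫ t : ℝ, t * Real.exp (-g t)) / ∫ t : ℝ, Real.exp (-g t)| ≤
      Real.sqrt (2 / (π * M₁)) * (1 - 1 / Real.sqrt (M₂ / M₁)) := by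
  have hd : ∀ t, HasDerivAt g (deriv g t) t :=
    fun t => (hC1.differentiable one_ne_zero t).hasDerivAt
  have hslope : ∀ t, 0 < t → M₁ * t ≤ deriv g t ∧ deriv g t ≤ M₂ * t := fun t ht => by
    simpa [hg'0] using hsd 0 t ht.le
  have hslope_neg : ∀ t, 0 < t → M₁ * t ≤ -deriv g (-t) ∧ -deriv g (-t) ≤ M₂ * t :=
    fun t ht => by
      have := hsd (-t) 0 (by linarith)
      rw [hg'0] at this
      constructor <;> linarith [this.1, this.2]
  have hD : 0 < ∫ t, exp (-g t) := integral_exp_pos <|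
    integrable_exp_neg_of_mul_sq_le (half_pos h1) hC1.continuous <|
      half_mul_sq_le_of_slope hC1.continuous hg0 hd (fun t ht => (hslope t ht).1)
        (fun t ht => (hslope_neg t ht).1)
  rw [sqrt_two_div_pi_mul_mul_one_sub_eq_centerOfMassBound h1 (h1.trans h12), abs_div,
    abs_of_pos hD, div_le_iff₀ hD]
  exact abs_integral_mul_exp_neg_le h1 h12.le hC1.continuous hg0 hd hslope hslope_neg
end

section
/- Let g be an (M_1,M_2)-admissible convex function on ℝ, and define ã(g) = ∫_ℝ e^{-g}, b̃(g) = ∫_ℝ (t − t̄)² e^{-g} dt with t̄ the center of mass, and d̃(g) = b̃(g)/ã(g)³. Then d̃(g) ≥ 1/12. -/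
/-!
Strong convexity with `g 0 = g' 0 = 0` gives `g t ≥ M₁ t² / 2 ≥ 0`, so `e^{-g}` is an integrable
density with values in `(0, 1]`. By the bathtub principle, among densities bounded by `1` with mass
`a`, the second moment about any point is smallest for the uniform density on an interval of
length `a`, where it equals `a³ / 12`.
-/

open MeasureTheory Real Set

theorem half_mul_sq_le_of_deriv_sub_ge {g : ℝ → ℝ} {m : ℝ} (hg : Differentiable ℝ g)
    (hg0 : g 0 = 0) (hg'0 : deriv g 0 = 0)
    (hsd : ∀ s t : ℝ, s ≤ t → m * (t - s) ≤ deriv g t - deriv g s) (t : ℝ) :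
    m / 2 * t ^ 2 ≤ g t := by
  set h : ℝ → ℝ := fun s => g s - m / 2 * s ^ 2
  have hh : ∀ s, HasDerivAt h (deriv g s - m * s) s := fun s =>
    ((hg s).hasDerivAt.sub ((hasDerivAt_pow 2 s).const_mul (m / 2))).congr_deriv (by ring)
  have hcont : Continuous h := continuous_iff_continuousAt.2 fun s => (hh s).continuousAt
  have hdiff : ∀ s, DifferentiableWithinAt ℝ h univ s :=
    fun s => (hh s).differentiableAt.differentiableWithinAt
  have h0 : h 0 = 0 := by simp [h, hg0]
  suffices 0 ≤ h t by simpa [h] using this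
  rcases le_total 0 t with ht | ht
  · refine h0 ▸ monotoneOn_of_deriv_nonneg (convex_Ici 0) hcont.continuousOn
      (fun s _ => (hdiff s).mono (subset_univ _)) (fun s hs => ?_) self_mem_Ici ht ht
    rw [interior_Ici] at hs
    have := hsd 0 s (le_of_lt hs)
    rw [(hh s).deriv]
    linarith
  · refine h0 ▸ antitoneOn_of_deriv_nonpos (convex_Iic 0) hcont.continuousOn
      (fun s _ => (hdiff s).mono (subset_univ _)) (fun s hs => ?_) ht self_mem_Iic ht
    rw [interior_Iic] at hs
    have := hsd s 0 (le_of_lt hs)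
    rw [(hh s).deriv]
    linarith

theorem integrable_sq_sub_mul_exp_neg_mul_sq {b : ℝ} (hb : 0 < b) (c : ℝ) :
    Integrable fun t : ℝ => (t - c) ^ 2 * exp (-b * t ^ 2) := by
  have h2 : Integrable fun t : ℝ => t ^ 2 * exp (-b * t ^ 2) := by
    simpa [rpow_two] using integrable_rpow_mul_exp_neg_mul_sq hb (s := 2) (by norm_num)
  refine ((h2.add ((integrable_mul_exp_neg_mul_sq hb).const_mul (-(2 * c)))).add
    ((integrable_exp_neg_mul_sq hb).const_mul (c ^ 2))).congr (ae_of_all _ fun t => ?_)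
  simp only [Pi.add_apply]
  ring

theorem integral_indicator_Icc_sq_sub_sq (c : ℝ) {r : ℝ} (hr : 0 ≤ r) :
    ∫ t, (Icc (c - r) (c + r)).indicator (fun t => (t - c) ^ 2 - r ^ 2) t = -(4 / 3) * r ^ 3 := by
  rw [integral_indicator measurableSet_Icc, integral_Icc_eq_integral_Ioc,
    ← intervalIntegral.integral_of_le (by linarith), intervalIntegral.integral_sub
      ((by fun_prop : Continuous fun t : ℝ => (t - c) ^ 2).intervalIntegrable _ _)
      intervalIntegrable_const,
    intervalIntegral.integral_comp_sub_right (· ^ 2), integral_pow, intervalIntegral.integral_const]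
  simp only [smul_eq_mul]
  ring

/-- Bathtub principle: the extremal density is the indicator of `[c - a/2, c + a/2]`, where
`a = ∫ f`. -/
theorem integral_pow_three_div_twelve_le_integral_sq_sub_mul {f : ℝ → ℝ} (c : ℝ)
    (hf0 : ∀ t, 0 ≤ f t) (hf1 : ∀ t, f t ≤ 1) (hf : Integrable f)
    (hfc : Integrable fun t => (t - c) ^ 2 * f t) :
    (∫ t, f t) ^ 3 / 12 ≤ ∫ t, (t - c) ^ 2 * f t := by
  set r := (∫ t, f t) / 2
  have hr : 0 ≤ r := div_nonneg (integral_nonneg hf0) zero_le_two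
  set φ := (Icc (c - r) (c + r)).indicator (fun t => (t - c) ^ 2 - r ^ 2)
  have hφ : Integrable φ := (((continuous_pow 2).comp (continuous_sub_right c)).sub
    continuous_const).continuousOn.integrableOn_Icc.integrable_indicator measurableSet_Icc
  -- the gap is `(1 - f) (r² - (t - c)²)` inside the interval and `((t - c)² - r²) f` outside
  have hpt : ∀ t, r ^ 2 * f t + φ t ≤ (t - c) ^ 2 * f t := fun t => by
    by_cases ht : t ∈ Icc (c - r) (c + r)
    · have : (t - c) ^ 2 ≤ r ^ 2 := sq_le_sq' (by linarith [ht.1]) (by linarith [ht.2])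
      simp only [φ, indicator_of_mem ht]
      nlinarith [mul_nonneg (sub_nonneg.2 (hf1 t)) (sub_nonneg.2 this)]
    · have : r ^ 2 ≤ (t - c) ^ 2 := by
        rw [mem_Icc, not_and_or, not_le, not_le] at ht
        rcases ht with ht | ht <;> nlinarith
      simp only [φ, indicator_of_notMem ht]
      nlinarith [mul_nonneg (sub_nonneg.2 this) (hf0 t)]
  have := integral_mono (f := fun t => r ^ 2 * f t + φ t) ((hf.const_mul _).add hφ) hfc hpt
  rw [integral_add (hf.const_mul _) hφ, integral_const_mul,
    integral_indicator_Icc_sq_sub_sq c hr] at this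
  have hI : ∫ t, f t = 2 * r := by ring
  rw [hI] at this ⊢
  linarith

theorem stmt13_general (g : ℝ → ℝ) (M₁ M₂ : ℝ) (h1 : 0 < M₁)
    (hC1 : ContDiff ℝ 1 g) (hg0 : g 0 = 0) (hg'0 : deriv g 0 = 0)
    (hsd : ∀ s t : ℝ, s ≤ t →
      M₁ * (t - s) ≤ deriv g t - deriv g s ∧ deriv g t - deriv g s ≤ M₂ * (t - s))
    (tbar : ℝ) :
    1/12 ≤ (∫ t : ℝ, (t - tbar)^2 * Real.exp (-g t)) /
      (∫ t : ℝ, Real.exp (-g t))^3 := by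
  have hg := hC1.differentiable one_ne_zero
  have hquad := half_mul_sq_le_of_deriv_sub_ge hg hg0 hg'0 fun s t hst => (hsd s t hst).1
  have hgauss : ∀ t, exp (-g t) ≤ exp (-(M₁ / 2) * t ^ 2) := fun t => by
    rw [exp_le_exp]
    linarith [hquad t]
  have hle1 : ∀ t, exp (-g t) ≤ 1 := fun t => by
    rw [exp_le_one_iff]
    nlinarith [hquad t, sq_nonneg t]
  have hcont : Continuous fun t => exp (-g t) := by fun_prop
  have hint : Integrable fun t => exp (-g t) :=
    (integrable_exp_neg_mul_sq (half_pos h1)).mono' hcont.aestronglyMeasurable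
      (ae_of_all _ fun t => by simpa [abs_of_pos (exp_pos _)] using hgauss t)
  have hint2 : Integrable fun t => (t - tbar) ^ 2 * exp (-g t) :=
    (integrable_sq_sub_mul_exp_neg_mul_sq (half_pos h1) tbar).mono'
      (by fun_prop) (ae_of_all _ fun t => by
        rw [norm_of_nonneg (by positivity)]
        exact mul_le_mul_of_nonneg_left (hgauss t) (sq_nonneg _))
  have hpos : 0 < ∫ t, exp (-g t) := integral_exp_pos hint
  rw [le_div_iff₀ (by positivity)]
  linarith [integral_pow_three_div_twelve_le_integral_sq_sub_mul tbar (fun t => (exp_pos _).le)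
    hle1 hint hint2]

theorem stmt13 (g : ℝ → ℝ) (M₁ M₂ : ℝ) (h1 : 0 < M₁) (h12 : M₁ < M₂)
    (hC1 : ContDiff ℝ 1 g) (hg0 : g 0 = 0) (hg'0 : deriv g 0 = 0)
    (hsd : ∀ s t : ℝ, s ≤ t →
      M₁ * (t - s) ≤ deriv g t - deriv g s ∧ deriv g t - deriv g s ≤ M₂ * (t - s))
    (tbar : ℝ)
    (htbar : tbar = (∫ t : ℝ, t * Real.exp (-g t)) / ∫ t : ℝ, Real.exp (-g t)) :
    1/12 ≤ (∫ t : ℝ, (t - tbar)^2 * Real.exp (-g t)) /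
      (∫ t : ℝ, Real.exp (-g t))^3 :=
  stmt13_general g M₁ M₂ h1 hC1 hg0 hg'0 hsd tbar
end

section
/- Let f₀ = Σ c_i x^i and f₁ = Σ c̄_i x^i both solve the balanced equation ∫_0^∞ c_i x^i/f₀ dx = ∫_0^∞ c̄_i x^i/f₁ dx = 1 − βδ_{0i}, normalized with c_0 = c̄_0 = 1, and extend c(i), c̄(i) to real i ≥ 1 via c(i) = (∫_0^∞ x^i/f₀ dx)^{-1}. Then the set Q = { c(i)/c̄(i) : i ∈ ℝ, i ≥ 1 } satisfies sup Q ∉ Q and inf Q ∉ Q, i.e. neither the supremum nor the infimum of the ratio c(i)/c̄(i) is attained. -/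
/-!
If the ratio `c(j) / c̄(j)` attained its supremum `M`, then `cₙ ≤ M c̄ₙ` for every `n ≥ 1`.
As `c₀ = c̄₀ = 1`, a bound `M < 1` would give `f₀ < f₁`, hence `∫ 1/f₁ < ∫ 1/f₀`, although both
integrals equal `1 - β`. So `M ≥ 1`, and `f₀ ≤ M f₁` termwise, strictly at some coefficient unless
`f₀ = f₁`. Integrating `x^j / (M f₁) < x^j / f₀` then gives `c(j) / c̄(j) < M`. The infimum is the
supremum of the reciprocal ratio, with `f₀` and `f₁` exchanged.
-/

open MeasureTheory Real Set

theorem MeasureTheory.integral_lt_integral_of_ne_zero_imp_lt {α : Type*} [MeasurableSpace α]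
    {μ : Measure α} {f g : α → ℝ} (hf : Integrable f μ) (hg : Integrable g μ)
    (hf0 : 0 ≤ᵐ[μ] f) (hg0 : 0 ≤ᵐ[μ] g) (hlt : ∀ᵐ x ∂μ, f x ≠ 0 → f x < g x)
    (hpos : 0 < ∫ x, f x ∂μ) : ∫ x, f x ∂μ < ∫ x, g x ∂μ := by
  have hsupp : 0 < μ (Function.support f) :=
    (integral_pos_iff_support_of_nonneg_ae hf0 hf).1 hpos
  have hsub : 0 ≤ᵐ[μ] fun x => g x - f x := by
    filter_upwards [hf0, hg0, hlt] with x hfx hgx hx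
    by_cases h : f x = 0
    · simpa [h] using hgx
    · exact sub_nonneg.2 (hx h).le
  have hdiff : 0 < ∫ x, g x - f x ∂μ := by
    rw [integral_pos_iff_support_of_nonneg_ae hsub (hg.sub hf)]
    refine hsupp.trans_le (measure_mono_ae ?_)
    filter_upwards [hlt] with x hx hfx
    exact sub_ne_zero.2 (hx hfx).ne'
  rw [integral_sub hg hf] at hdiff
  linarith

theorem inv_mul_div_tsum_lt_div_tsum {a b : ℕ → ℝ} {K x w : ℝ} {k : ℕ} (ha : ∀ n, 0 < a n)
    (hle : ∀ n, a n ≤ K * b n) (hlt : a k < K * b k) (hx : 0 < x) (hw : 0 < w)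
    (hG : ∑' n, b n * x ^ n ≠ 0) :
    K⁻¹ * (w / ∑' n, b n * x ^ n) < w / ∑' n, a n * x ^ n := by
  have hb : Summable fun n => b n * x ^ n := by
    by_contra h
    exact hG (tsum_eq_zero_of_not_summable h)
  have hKb : Summable fun n => K * (b n * x ^ n) := hb.mul_left K
  have ha0 : ∀ n, 0 ≤ a n * x ^ n := fun n => mul_nonneg (ha n).le (pow_nonneg hx.le n)
  have hterm : ∀ n, a n * x ^ n ≤ K * (b n * x ^ n) := fun n => by
    rw [← mul_assoc]
    exact mul_le_mul_of_nonneg_right (hle n) (pow_nonneg hx.le n)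
  have hF : 0 < ∑' n, a n * x ^ n :=
    (hKb.of_nonneg_of_le ha0 hterm).tsum_pos ha0 0 (by simpa using ha 0)
  have hFG : ∑' n, a n * x ^ n < K * ∑' n, b n * x ^ n := by
    rw [← tsum_mul_left]
    refine Summable.tsum_lt_tsum_of_nonneg (i := k) ha0 hterm ?_ hKb
    rw [← mul_assoc]
    exact mul_lt_mul_of_pos_right hlt (pow_pos hx k)
  calc K⁻¹ * (w / ∑' n, b n * x ^ n) = w / (K * ∑' n, b n * x ^ n) := by ring
    _ < w / ∑' n, a n * x ^ n := div_lt_div_of_pos_left hw hF hFG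

theorem rpow_le_pow_floor_add_pow_floor_succ {x i : ℝ} (hx : 0 < x) (hi : 0 ≤ i) :
    x ^ i ≤ x ^ ⌊i⌋₊ + x ^ (⌊i⌋₊ + 1) := by
  rcases le_total x 1 with hx1 | hx1
  · have : x ^ i ≤ x ^ (⌊i⌋₊ : ℝ) := rpow_le_rpow_of_exponent_ge hx hx1 (Nat.floor_le hi)
    rw [rpow_natCast] at this
    linarith [pow_nonneg hx.le (⌊i⌋₊ + 1)]
  · have : x ^ i ≤ x ^ ((⌊i⌋₊ + 1 : ℕ) : ℝ) := by
      push_cast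
      exact rpow_le_rpow_of_exponent_le hx1 (Nat.lt_floor_add_one i).le
    rw [rpow_natCast] at this
    linarith [pow_nonneg hx.le ⌊i⌋₊]

theorem integrableOn_rpow_div_of_forall_pow {F : ℝ → ℝ}
    (hF : ∀ n : ℕ, IntegrableOn (fun x => x ^ n / F x) (Ioi 0)) {i : ℝ} (hi : 0 ≤ i) :
    IntegrableOn (fun x => x ^ i / F x) (Ioi 0) := by
  set n := ⌊i⌋₊
  have hmeas : AEStronglyMeasurable (fun x => x ^ i / F x) (volume.restrict (Ioi 0)) := by
    have h := (measurable_id.pow_const i).aestronglyMeasurable.mul (hF 0).aestronglyMeasurable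
    simpa only [id, pow_zero, Pi.mul_def, mul_one_div] using h
  refine Integrable.mono' ((hF n).norm.add (hF (n + 1)).norm) hmeas ?_
  refine ae_restrict_of_forall_mem measurableSet_Ioi fun x (hx : 0 < x) => ?_
  simp only [Pi.add_apply, norm_div, Real.norm_eq_abs, abs_of_pos (rpow_pos_of_pos hx i),
    abs_of_pos (pow_pos hx n), abs_of_pos (pow_pos hx (n + 1)), ← add_div]
  exact div_le_div_of_nonneg_right (rpow_le_pow_floor_add_pow_floor_succ hx hi) (abs_nonneg _)

structure BalancedSeries (β : ℝ) (a : ℕ → ℝ) (F : ℝ → ℝ) : Prop where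
  coeff_pos : ∀ n, 0 < a n
  coeff_zero : a 0 = 1
  eq_tsum : ∀ x, F x = ∑' n, a n * x ^ n
  balance : ∀ n : ℕ, ∫ x in Ioi 0, a n * x ^ n / F x = 1 - if n = 0 then β else 0

/-- The coefficient `c(i)` of the paper, extended to real `i`. -/
noncomputable def extCoeff (F : ℝ → ℝ) (i : ℝ) : ℝ :=
  (∫ x in Ioi 0, x ^ i / F x)⁻¹

namespace BalancedSeries

variable {β : ℝ} {a b : ℕ → ℝ} {F G : ℝ → ℝ}

theorem nonneg (hF : BalancedSeries β a F) {x : ℝ} (hx : 0 ≤ x) : 0 ≤ F x :=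
  hF.eq_tsum x ▸ tsum_nonneg fun n => mul_nonneg (hF.coeff_pos n).le (pow_nonneg hx n)

theorem mul_setIntegral_pow_div (hF : BalancedSeries β a F) (n : ℕ) :
    a n * ∫ x in Ioi 0, x ^ n / F x = 1 - if n = 0 then β else 0 := by
  rw [← integral_const_mul, ← hF.balance n]
  simp only [mul_div_assoc]

theorem setIntegral_one_div (hF : BalancedSeries β a F) : ∫ x in Ioi 0, 1 / F x = 1 - β := by
  simpa [hF.coeff_zero] using hF.mul_setIntegral_pow_div 0

theorem integrableOn_pow_div (hF : BalancedSeries β a F) (hβ : β < 1) (n : ℕ) :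
    IntegrableOn (fun x => x ^ n / F x) (Ioi 0) := by
  by_contra h
  have := hF.mul_setIntegral_pow_div n
  rw [integral_undef h, mul_zero] at this
  split_ifs at this <;> linarith

theorem integrableOn_rpow_div (hF : BalancedSeries β a F) (hβ : β < 1) {i : ℝ} (hi : 0 ≤ i) :
    IntegrableOn (fun x => x ^ i / F x) (Ioi 0) :=
  integrableOn_rpow_div_of_forall_pow (hF.integrableOn_pow_div hβ) hi

theorem setIntegral_rpow_div_pos (hF : BalancedSeries β a F) (hβ : β < 1) {i : ℝ} (hi : 0 ≤ i) :
    0 < ∫ x in Ioi 0, x ^ i / F x := by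
  have hnonneg : ∀ j : ℝ, 0 ≤ᵐ[volume.restrict (Ioi 0)] fun x => x ^ j / F x := fun j =>
    ae_restrict_of_forall_mem measurableSet_Ioi fun x hx =>
      div_nonneg (rpow_nonneg (le_of_lt hx) j) (hF.nonneg (le_of_lt hx))
  have h0 : 0 < ∫ x in Ioi 0, x ^ (0 : ℝ) / F x := by
    simp only [rpow_zero, hF.setIntegral_one_div]
    linarith
  rw [setIntegral_pos_iff_support_of_nonneg_ae (hnonneg 0)
    (hF.integrableOn_rpow_div hβ le_rfl)] at h0
  rw [setIntegral_pos_iff_support_of_nonneg_ae (hnonneg i) (hF.integrableOn_rpow_div hβ hi)]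
  refine h0.trans_le (measure_mono ?_)
  rintro x ⟨hsupp, hx : 0 < x⟩
  refine ⟨?_, hx⟩
  simp only [Function.mem_support, rpow_zero, one_div, ne_eq, inv_eq_zero] at hsupp ⊢
  exact div_ne_zero (rpow_pos_of_pos hx i).ne' hsupp

theorem extCoeff_pos (hF : BalancedSeries β a F) (hβ : β < 1) {i : ℝ} (hi : 0 ≤ i) :
    0 < extCoeff F i :=
  inv_pos.2 (hF.setIntegral_rpow_div_pos hβ hi)

theorem extCoeff_natCast (hF : BalancedSeries β a F) {n : ℕ} (hn : n ≠ 0) :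
    extCoeff F n = a n := by
  have h := hF.mul_setIntegral_pow_div n
  rw [if_neg hn, sub_zero] at h
  simp only [extCoeff, rpow_natCast, eq_inv_of_mul_eq_one_right h, inv_inv]

theorem inv_mul_setIntegral_rpow_div_lt (hF : BalancedSeries β a F) (hG : BalancedSeries β b G)
    (hβ : β < 1) {K : ℝ} {k : ℕ} (hle : ∀ n, a n ≤ K * b n) (hlt : a k < K * b k) {i : ℝ}
    (hi : 0 ≤ i) : K⁻¹ * ∫ x in Ioi 0, x ^ i / G x < ∫ x in Ioi 0, x ^ i / F x := by
  have hK : 0 < K := by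
    have := hle 0
    rw [hF.coeff_zero, hG.coeff_zero, mul_one] at this
    linarith
  rw [← integral_const_mul]
  refine integral_lt_integral_of_ne_zero_imp_lt ((hG.integrableOn_rpow_div hβ hi).const_mul _)
    (hF.integrableOn_rpow_div hβ hi) ?_ ?_ ?_ ?_
  · exact ae_restrict_of_forall_mem measurableSet_Ioi fun x hx => mul_nonneg (inv_pos.2 hK).le
      (div_nonneg (rpow_nonneg (le_of_lt hx) i) (hG.nonneg (le_of_lt hx)))
  · exact ae_restrict_of_forall_mem measurableSet_Ioi fun x hx =>
      div_nonneg (rpow_nonneg (le_of_lt hx) i) (hF.nonneg (le_of_lt hx))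
  · -- where the series of `G` diverges, `G x = 0` and the left side vanishes
    refine ae_restrict_of_forall_mem measurableSet_Ioi fun x (hx : 0 < x) hne => ?_
    have hGx : G x ≠ 0 := fun h => hne (by simp [h])
    rw [hG.eq_tsum] at hGx ⊢
    rw [hF.eq_tsum]
    exact inv_mul_div_tsum_lt_div_tsum hF.coeff_pos hle hlt hx (rpow_pos_of_pos hx i) hGx
  · rw [integral_const_mul]
    exact mul_pos (inv_pos.2 hK) (hG.setIntegral_rpow_div_pos hβ hi)

theorem extCoeff_div_extCoeff_lt (hF : BalancedSeries β a F) (hG : BalancedSeries β b G)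
    (hβ : β < 1) (hne : F ≠ G) {K : ℝ} (hK : ∀ n, n ≠ 0 → a n / b n ≤ K) {i : ℝ}
    (hi : 0 ≤ i) : extCoeff F i / extCoeff G i < K := by
  have hle : ∀ n, n ≠ 0 → a n ≤ K * b n := fun n hn =>
    (div_le_iff₀ (hG.coeff_pos n)).1 (hK n hn)
  rcases lt_or_ge K 1 with hK1 | hK1
  · -- `a ≤ b` with `a₁ < b₁` would force `∫ 1/G < ∫ 1/F`
    exfalso
    have hab : ∀ n, a n ≤ 1 * b n := fun n => by
      rcases eq_or_ne n 0 with rfl | hn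
      · rw [hF.coeff_zero, hG.coeff_zero, one_mul]
      · nlinarith [hle n hn, hG.coeff_pos n]
    have h := hF.inv_mul_setIntegral_rpow_div_lt hG hβ hab
      (by nlinarith [hle 1 one_ne_zero, hG.coeff_pos 1]) le_rfl
    simp only [rpow_zero, inv_one, one_mul, hF.setIntegral_one_div,
      hG.setIntegral_one_div] at h
    exact lt_irrefl _ h
  have hle' : ∀ n, a n ≤ K * b n := fun n => by
    rcases eq_or_ne n 0 with rfl | hn
    · rwa [hF.coeff_zero, hG.coeff_zero, mul_one]
    · exact hle n hn
  obtain ⟨k, hk⟩ : ∃ k, a k < K * b k := by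
    by_contra! hge
    have heq : ∀ n, a n = K * b n := fun n => (hle' n).antisymm (hge n)
    have hK : K = 1 := by simpa [hF.coeff_zero, hG.coeff_zero] using (heq 0).symm
    exact hne (funext fun x => by simp [hF.eq_tsum, hG.eq_tsum, heq, hK])
  have h := hF.inv_mul_setIntegral_rpow_div_lt hG hβ hle' hk hi
  rw [inv_mul_lt_iff₀ (by linarith)] at h
  rw [extCoeff, extCoeff, inv_div_inv, div_lt_iff₀ (hF.setIntegral_rpow_div_pos hβ hi)]
  exact h

end BalancedSeries

theorem stmt17 (β : ℝ) (hβ : β ∈ Set.Ico (0:ℝ) 1)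
    (cc ccbar : ℕ → ℝ) (hcc : ∀ n, 0 < cc n) (hccbar : ∀ n, 0 < ccbar n)
    (hcc0 : cc 0 = 1) (hccbar0 : ccbar 0 = 1)
    (f₀ f₁ : ℝ → ℝ)
    (hf₀ : ∀ x : ℝ, f₀ x = ∑' n : ℕ, cc n * x ^ n)
    (hf₁ : ∀ x : ℝ, f₁ x = ∑' n : ℕ, ccbar n * x ^ n)
    (hne : f₀ ≠ f₁)
    (hbal₀ : ∀ n : ℕ,
      (∫ x in Set.Ioi (0:ℝ), cc n * x ^ n / f₀ x) = 1 - if n = 0 then β else 0)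
    (hbal₁ : ∀ n : ℕ,
      (∫ x in Set.Ioi (0:ℝ), ccbar n * x ^ n / f₁ x) = 1 - if n = 0 then β else 0)
    (c cbar : ℝ → ℝ)
    (hc : ∀ i : ℝ, 1 ≤ i → c i = (∫ x in Set.Ioi (0:ℝ), x ^ i / f₀ x)⁻¹)
    (hcbar : ∀ i : ℝ, 1 ≤ i → cbar i = (∫ x in Set.Ioi (0:ℝ), x ^ i / f₁ x)⁻¹)
    (Q : Set ℝ) (hQ : Q = {r : ℝ | ∃ i : ℝ, 1 ≤ i ∧ r = c i / cbar i}) :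
    sSup Q ∉ Q ∧ sInf Q ∉ Q := by
  have hF : BalancedSeries β cc f₀ := ⟨hcc, hcc0, hf₀, hbal₀⟩
  have hG : BalancedSeries β ccbar f₁ := ⟨hccbar, hccbar0, hf₁, hbal₁⟩
  have hratio : ∀ i, 1 ≤ i → c i / cbar i = extCoeff f₀ i / extCoeff f₁ i := fun i hi => by
    rw [hc i hi, hcbar i hi, extCoeff, extCoeff]
  have hpos : ∀ r ∈ Q, 0 < r := by
    rw [hQ]
    rintro _ ⟨i, hi, rfl⟩
    rw [hratio i hi]
    exact div_pos (hF.extCoeff_pos hβ.2 (by linarith)) (hG.extCoeff_pos hβ.2 (by linarith))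
  have hnat : ∀ n : ℕ, n ≠ 0 → cc n / ccbar n ∈ Q := fun n hn => by
    have h1n : (1 : ℝ) ≤ n := by exact_mod_cast Nat.one_le_iff_ne_zero.2 hn
    rw [hQ]
    exact ⟨n, h1n, by rw [hratio n h1n, hF.extCoeff_natCast hn, hG.extCoeff_natCast hn]⟩
  constructor
  · intro hmem
    have hbdd : BddAbove Q := not_not.1 fun h => (hpos _ hmem).ne' (Real.sSup_of_not_bddAbove h)
    obtain ⟨j, hj, hM⟩ : ∃ i : ℝ, 1 ≤ i ∧ sSup Q = c i / cbar i := hQ ▸ hmem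
    have h := hF.extCoeff_div_extCoeff_lt hG hβ.2 hne
      (fun n hn => le_csSup hbdd (hnat n hn)) (by linarith : (0 : ℝ) ≤ j)
    rw [← hratio j hj, ← hM] at h
    exact lt_irrefl _ h
  · intro hmem
    have hbdd : BddBelow Q := ⟨0, fun r hr => (hpos r hr).le⟩
    obtain ⟨j, hj, hm⟩ : ∃ i : ℝ, 1 ≤ i ∧ sInf Q = c i / cbar i := hQ ▸ hmem
    have h := hG.extCoeff_div_extCoeff_lt hF hβ.2 hne.symm
      (fun n hn => inv_div (cc n) (ccbar n) ▸ inv_anti₀ (hpos _ hmem) (csInf_le hbdd (hnat n hn)))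
      (by linarith : (0 : ℝ) ≤ j)
    rw [← inv_div, ← hratio j hj, ← hm] at h
    exact lt_irrefl _ h
end
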